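/- arXiv:1603.07233 — 7 statements merged into one kernel-verified Lean document; each statement's English description precedes it below -/
import Mathlib

section
/- Let α ∈ (0,1/2) be irrational. For every integer n ≥ 0, φ({nα}) = (−1)^{ψ_1 + ψ_2 + ⋯ + ψ_n}, where ψ_j := 1 if the fractional part {2(j−1)α} lies in [1−2α, 1) and ψ_j := 0 otherwise (the empty sum for n = 0 being 0). -/
/-- `φ(x) = 1` if the fractional part of `x` lies in `[0,1/2)`, and `−1` otherwise. -/
noncomputable def phi (x : ℝ) : ℤ := if Int.fract x < 1/2 then 1 else -1

/-- `ψ_j = 1` if `{2(j−1)α} ∈ [1−2α, 1)` and `0` otherwise (here `j ≥ 1`). -/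
noncomputable def psiInd (α : ℝ) (j : ℕ) : ℕ :=
  if Int.fract (2 * ((j : ℝ) - 1) * α) ∈ Set.Ico (1 - 2*α) 1 then 1 else 0

lemma phi_step (α x : ℝ) (h0 : 0 < α) (h1 : α < 1/2) (hx0 : 0 ≤ x) (hx1 : x < 1) :
    phi (x + α) = phi x *
      (-1 : ℤ) ^ (if Int.fract (2*x) ∈ Set.Ico (1 - 2*α) 1 then 1 else 0) := by
  unfold phi
  have hxx : Int.fract x = x := Int.fract_eq_self.2 ⟨hx0, hx1⟩
  rw [hxx]
  by_cases hhalf : x < 1/2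
  · have h2x : Int.fract (2*x) = 2*x := Int.fract_eq_self.2 ⟨by linarith, by linarith⟩
    rw [h2x]
    by_cases hc : x + α < 1/2
    · have hf : Int.fract (x + α) = x + α := Int.fract_eq_self.2 ⟨by linarith, by linarith⟩
      rw [hf, if_pos hc, if_pos hhalf, if_neg]
      · simp
      · simp only [Set.mem_Ico]
        intro h; linarith [h.1]
    · have hf : Int.fract (x + α) = x + α := Int.fract_eq_self.2 ⟨by linarith, by linarith⟩
      rw [hf, if_neg hc, if_pos hhalf, if_pos]
      · simp
      · exact ⟨by linarith, by linarith⟩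
  · have h2x : Int.fract (2*x) = 2*x - 1 := by
      have : Int.fract (2*x) = Int.fract (2*x - (1:ℤ)) := (Int.fract_sub_intCast _ _).symm
      rw [this]
      push_cast
      exact Int.fract_eq_self.2 ⟨by linarith, by linarith⟩
    rw [h2x]
    by_cases hc : x + α < 1
    · have hf : Int.fract (x + α) = x + α := Int.fract_eq_self.2 ⟨by linarith, by linarith⟩
      rw [hf, if_neg (by linarith : ¬ (x + α < 1/2)), if_neg hhalf, if_neg]
      · simp
      · simp only [Set.mem_Ico]
        intro h; linarith [h.1]
    · have hf : Int.fract (x + α) = x + α - 1 := by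
        have : Int.fract (x + α) = Int.fract (x + α - (1:ℤ)) := (Int.fract_sub_intCast _ _).symm
        rw [this]
        push_cast
        exact Int.fract_eq_self.2 ⟨by linarith, by linarith⟩
      rw [hf, if_pos (by linarith : x + α - 1 < 1/2), if_neg hhalf, if_pos]
      · simp
      · exact ⟨by linarith, by linarith⟩

lemma phi_fract (y : ℝ) : phi (Int.fract y) = phi y := by
  unfold phi; rw [Int.fract_fract]

theorem phi_orbit_parity_formula
    (α : ℝ) (h0 : 0 < α) (h1 : α < 1/2) (hirr : Irrational α) (n : ℕ) :
    phi (Int.fract ((n : ℝ) * α)) =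
      (-1 : ℤ) ^ (∑ j ∈ Finset.Icc 1 n, psiInd α j) := by
  induction n with
  | zero =>
    simp [phi, Int.fract_zero]
  | succ n ih =>
    set x := Int.fract ((n : ℝ) * α) with hxdef
    have hx0 : 0 ≤ x := Int.fract_nonneg _
    have hx1 : x < 1 := Int.fract_lt_one _
    have hfx : Int.fract (((n : ℕ) + 1 : ℕ) * α : ℝ) = Int.fract (x + α) := by
      push_cast
      have : ((n : ℝ) + 1) * α = (x + α) + (⌊(n : ℝ) * α⌋ : ℤ) := by
        rw [hxdef]; unfold Int.fract; push_cast; ring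
      rw [this, Int.fract_add_intCast]
    have h2 : Int.fract (2 * (((n + 1 : ℕ) : ℝ) - 1) * α) = Int.fract (2 * x) := by
      push_cast
      have : 2 * ((n : ℝ) + 1 - 1) * α = 2 * x + (2 * ⌊(n : ℝ) * α⌋ : ℤ) := by
        rw [hxdef]; unfold Int.fract; push_cast; ring
      rw [this, Int.fract_add_intCast]
    have hpsi : psiInd α (n + 1) =
        if Int.fract (2*x) ∈ Set.Ico (1 - 2*α) 1 then 1 else 0 := by
      unfold psiInd; rw [h2]
    have hsum : ∑ j ∈ Finset.Icc 1 (n + 1), psiInd α j =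
        (∑ j ∈ Finset.Icc 1 n, psiInd α j) + psiInd α (n + 1) := by
      rw [Finset.sum_Icc_succ_top (Nat.one_le_iff_ne_zero.2 (Nat.succ_ne_zero n))]
    rw [hfx, phi_fract, phi_step α x h0 h1 hx0 hx1, hsum, pow_add]
    rw [← ih, hpsi, phi_fract]
end

section
/- Let β ∈ (0,1) be irrational with minus continued fraction digits (n_k). Then for every k ≥ 1 and every 1 ≤ j ≤ ℓ_k(0), the j-th letter of the word b_k(0) equals ψ_j^{(β)}, where ψ_n^{(β)} := 1 if the fractional part {(n−1)β} lies in [1−β, 1) and ψ_n^{(β)} := 0 otherwise. -/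
/-- `β_k`: the orbit of `β` under the minus (modified) continued fraction algorithm,
`β_0 = β`, `β_{k+1} = ⌈1/β_k⌉ − 1/β_k`. -/
noncomputable def betaSeq (β : ℝ) : ℕ → ℝ
  | 0 => β
  | k+1 => (⌈1 / betaSeq β k⌉ : ℝ) - 1 / betaSeq β k

/-- The minus continued fraction digits: `nDigit β k = n_{k+1} = ⌈1/β_k⌉`. -/
noncomputable def nDigit (β : ℝ) (k : ℕ) : ℤ := ⌈1 / betaSeq β k⌉

/-- Block lengths `(ℓ_k(0), ℓ_k(1))`. -/
noncomputable def ell (β : ℝ) : ℕ → ℕ × ℕ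
  | 0 => (1, 1)
  | k+1 => ((nDigit β k - 1).toNat * (ell β k).1 + (ell β k).2,
            (nDigit β k - 2).toNat * (ell β k).1 + (ell β k).2)

/-- The substitution words `(b_k(0), b_k(1))` over `{0,1}`. -/
noncomputable def bword (β : ℝ) : ℕ → List ℕ × List ℕ
  | 0 => ([0], [1])
  | k+1 =>
      ((List.replicate (nDigit β k - 1).toNat (bword β k).1).flatten ++ (bword β k).2,
       (List.replicate (nDigit β k - 2).toNat (bword β k).1).flatten ++ (bword β k).2)

/-!
The word `b_k(0)` is the coding of the rotation `x ↦ x + β (mod 1)` with respect to the partition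
`{[0, 1 - β), [1 - β, 1)}`, started at `0`. This follows from a Rauzy-induction style invariant:
with `ε_k = β β_1 ⋯ β_{k-1}`, a point of `[0, ε_k - ε_{k+1})` resp. `[ε_k - ε_{k+1}, ε_k)` is
moved back into `[0, ε_k)` after `ℓ_k(0)` resp. `ℓ_k(1)` steps, by `ε_{k+1}` resp. `ε_{k+1} - ε_k`
(mod 1), and its orbit meanwhile spells `b_k(0)` resp. `b_k(1)`. For the induction step, an orbit
starting in `[0, ε_{k+1})` passes `n_{k+1} - 1` (or `n_{k+1} - 2`) times through the left piece,
each time shifting by `ε_{k+1}`, and then once through the right piece; the shifts are read off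
from `ℓ_k(0) β ≡ ε_{k+1}` and `ℓ_k(1) β ≡ ε_{k+1} - ε_k (mod 1)`.
-/

open Set

namespace MinusContinuedFraction

/-- The paper's `ψ_n` is `codingLetter β 0 (n - 1)`. -/
noncomputable def codingLetter (β x : ℝ) (i : ℕ) : ℕ :=
  if Int.fract (x + i * β) ∈ Ico (1 - β) 1 then 1 else 0

noncomputable def coding (β x : ℝ) (n : ℕ) : List ℕ :=
  (List.range n).map (codingLetter β x)

def CodesRotation (β E E' : ℝ) (w₀ w₁ : List ℕ) : Prop :=
  (∀ x ∈ Ico 0 (E - E'), w₀ = coding β x w₀.length) ∧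
    ∀ x ∈ Ico (E - E') E, w₁ = coding β x w₁.length

noncomputable def eps (β : ℝ) (k : ℕ) : ℝ :=
  ∏ i ∈ Finset.range k, betaSeq β i

section Coding

variable {β : ℝ}

theorem codingLetter_add_index (x : ℝ) (n i : ℕ) :
    codingLetter β x (n + i) = codingLetter β (x + n * β) i := by
  simp only [codingLetter, Nat.cast_add, add_mul, add_assoc]

theorem codingLetter_add_intCast (x : ℝ) (p : ℤ) (i : ℕ) :
    codingLetter β (x + p) i = codingLetter β x i := by
  rw [codingLetter, codingLetter, add_right_comm, Int.fract_add_intCast]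

theorem getD_coding {x : ℝ} {n i : ℕ} (hi : i < n) :
    (coding β x n).getD i 0 = codingLetter β x i := by
  simp [coding, List.getD_eq_getElem?_getD, List.getElem?_range hi]

theorem coding_add (x : ℝ) (a b : ℕ) :
    coding β x (a + b) = coding β x a ++ coding β (x + a * β) b := by
  simp only [coding, List.range_add, List.map_append, List.map_map]
  congr 2
  funext i
  exact codingLetter_add_index x a i

theorem coding_add_intCast (x : ℝ) (p : ℤ) (n : ℕ) :
    coding β (x + p) n = coding β x n := by
  unfold coding
  congr 1
  funext i
  exact codingLetter_add_intCast x p i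

theorem coding_add_of_mul_eq {q : ℕ} {p : ℤ} {E : ℝ} (hq : q * β = p + E) (x : ℝ) (b : ℕ) :
    coding β x (q + b) = coding β x q ++ coding β (x + E) b := by
  rw [coding_add, hq, ← add_assoc, add_right_comm, coding_add_intCast]

theorem coding_mul_add {q : ℕ} {p : ℤ} {E : ℝ} {w : List ℕ} (hq : q * β = p + E) (M : ℕ)
    {x : ℝ} (hw : ∀ m < M, coding β (x + m * E) q = w) (b : ℕ) :
    coding β x (M * q + b) = (List.replicate M w).flatten ++ coding β (x + M * E) b := by
  induction M generalizing x with
  | zero => simp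
  | succ M ih =>
    have hx : coding β x q = w := by simpa using hw 0 M.succ_pos
    have hxE := ih (x := x + E) fun m hm ↦ by
      rw [← hw (m + 1) (by omega)]; push_cast; ring_nf
    rw [Nat.succ_mul, add_comm (M * q), add_assoc, coding_add_of_mul_eq hq, hx, hxE,
      List.replicate_succ, List.flatten_cons, List.append_assoc]
    push_cast
    ring_nf

/-- The orbit of `x` passes `M` times through `[0, E - E')`, each time shifting by `E'`,
and then once through `[E - E', E)`. -/
theorem CodesRotation.flatten_replicate_append {E E' : ℝ} {w₀ w₁ : List ℕ} {p : ℤ}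
    (h : CodesRotation β E E' w₀ w₁) (hE' : 0 ≤ E') (hq : w₀.length * β = p + E')
    {x : ℝ} (hx : 0 ≤ x) {M : ℕ} (hM : x + M * E' ∈ Ico (E - E') E) :
    (List.replicate M w₀).flatten ++ w₁ = coding β x (M * w₀.length + w₁.length) := by
  have hfirst : ∀ m < M, coding β (x + m * E') w₀.length = w₀ := by
    intro m hm
    have : (m : ℝ) + 1 ≤ M := by exact_mod_cast hm
    refine (h.1 _ ⟨by positivity, ?_⟩).symm
    nlinarith [hM.1, hM.2]
  rw [coding_mul_add hq M hfirst, ← h.2 _ hM]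

end Coding

theorem betaSeq_succ (β : ℝ) (k : ℕ) :
    betaSeq β (k + 1) = nDigit β k - 1 / betaSeq β k :=
  rfl

theorem eps_zero (β : ℝ) : eps β 0 = 1 :=
  Finset.prod_range_zero _

theorem eps_one (β : ℝ) : eps β 1 = β :=
  Finset.prod_range_one _

section Digits

variable {β : ℝ} (h0 : 0 < β) (h1 : β < 1) (hirr : Irrational β)
include h0 h1 hirr

theorem irrational_betaSeq_and_mem_Ioo (k : ℕ) :
    Irrational (betaSeq β k) ∧ betaSeq β k ∈ Ioo 0 1 := by
  induction k with
  | zero => exact ⟨hirr, h0, h1⟩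
  | succ k ih =>
    have hinv : Irrational (1 / betaSeq β k) := by simpa only [one_div] using ih.1.inv
    have hle := Int.le_ceil (1 / betaSeq β k)
    have hne := hinv.ne_int ⌈1 / betaSeq β k⌉
    have hlt := Int.ceil_lt_add_one (1 / betaSeq β k)
    rw [betaSeq_succ, nDigit]
    exact ⟨hinv.intCast_sub _, sub_pos.2 (lt_of_le_of_ne hle hne), by linarith⟩

theorem two_le_nDigit (k : ℕ) : 2 ≤ nDigit β k := by
  obtain ⟨hpos, hlt⟩ := (irrational_betaSeq_and_mem_Ioo h0 h1 hirr k).2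
  have : ((1 : ℤ) : ℝ) < 1 / betaSeq β k := by simpa using (one_lt_div hpos).2 hlt
  have := Int.lt_ceil.2 this
  unfold nDigit
  omega

theorem cast_toNat_nDigit_sub {c : ℤ} (hc : c ≤ 2) (k : ℕ) :
    (((nDigit β k - c).toNat : ℕ) : ℝ) = nDigit β k - c := by
  have := two_le_nDigit h0 h1 hirr k
  rw [← Int.cast_natCast, Int.toNat_of_nonneg (by omega), Int.cast_sub]

theorem eps_pos (k : ℕ) : 0 < eps β k :=
  Finset.prod_pos fun i _ ↦ (irrational_betaSeq_and_mem_Ioo h0 h1 hirr i).2.1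

theorem eps_succ_lt (k : ℕ) : eps β (k + 1) < eps β k := by
  rw [eps, Finset.prod_range_succ]
  exact mul_lt_of_lt_one_right (eps_pos h0 h1 hirr k)
    (irrational_betaSeq_and_mem_Ioo h0 h1 hirr k).2.2

theorem eps_add_two (k : ℕ) : eps β (k + 2) = nDigit β k * eps β (k + 1) - eps β k := by
  have hb := (irrational_betaSeq_and_mem_Ioo h0 h1 hirr k).2.1.ne'
  simp only [eps, Finset.prod_range_succ, betaSeq_succ]
  field_simp

end Digits

section Words

variable {β : ℝ}

theorem length_flatten_replicate_append (M : ℕ) (w₀ w₁ : List ℕ) :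
    ((List.replicate M w₀).flatten ++ w₁).length = M * w₀.length + w₁.length := by
  simp [List.length_flatten, List.sum_replicate]

theorem length_bword (k : ℕ) :
    ((bword β k).1.length, (bword β k).2.length) = ell β k := by
  induction k with
  | zero => rfl
  | succ k ih => simp only [bword, ell, length_flatten_replicate_append, ← ih]

variable (h0 : 0 < β) (h1 : β < 1) (hirr : Irrational β)
include h0 h1 hirr

theorem exists_length_bword_mul_eq (k : ℕ) :
    ∃ p₀ p₁ : ℤ, (bword β k).1.length * β = p₀ + eps β (k + 1) ∧
      (bword β k).2.length * β = p₁ + (eps β (k + 1) - eps β k) := by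
  induction k with
  | zero => exact ⟨0, 1, by simp [bword, eps_one], by simp [bword, eps_zero, eps_one]⟩
  | succ k ih =>
    obtain ⟨p₀, p₁, hp₀, hp₁⟩ := ih
    have hrec := eps_add_two h0 h1 hirr k
    have c₁ := cast_toNat_nDigit_sub h0 h1 hirr (by norm_num : (1 : ℤ) ≤ 2) k
    have c₂ := cast_toNat_nDigit_sub h0 h1 hirr le_rfl k
    refine ⟨(nDigit β k - 1) * p₀ + p₁, (nDigit β k - 2) * p₀ + p₁, ?_, ?_⟩ <;>
      simp only [bword, length_flatten_replicate_append, Nat.cast_add, Nat.cast_mul, c₁, c₂] <;>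
      push_cast
    · linear_combination ((nDigit β k : ℝ) - 1) * hp₀ + hp₁ - hrec
    · linear_combination ((nDigit β k : ℝ) - 2) * hp₀ + hp₁ - hrec

theorem codesRotation_bword (k : ℕ) :
    CodesRotation β (eps β k) (eps β (k + 1)) (bword β k).1 (bword β k).2 := by
  induction k with
  | zero =>
    rw [eps_zero, eps_one]
    refine ⟨fun x hx ↦ ?_, fun x hx ↦ ?_⟩ <;>
      have hfract := Int.fract_eq_self.2 ⟨by linarith [hx.1], hx.2.trans_le (by linarith)⟩ <;>
      simp [bword, coding, codingLetter, hfract, hx.1, hx.2, not_le.2 hx.2]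
  | succ k ih =>
    obtain ⟨p₀, -, hq, -⟩ := exists_length_bword_mul_eq h0 h1 hirr k
    have hrec := eps_add_two h0 h1 hirr k
    have hE' := eps_pos h0 h1 hirr (k + 1)
    have hE'' := eps_pos h0 h1 hirr (k + 2)
    have hlt := eps_succ_lt h0 h1 hirr (k + 1)
    have c₁ := cast_toNat_nDigit_sub h0 h1 hirr (by norm_num : (1 : ℤ) ≤ 2) k
    have c₂ := cast_toNat_nDigit_sub h0 h1 hirr le_rfl k
    push_cast at c₁ c₂
    -- `eps_add_two` turns the left piece `[0, ε_{k+1} - ε_{k+2})` into `[0, ε_k - (n - 1) ε_{k+1})`.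
    refine ⟨fun x hx ↦ ?_, fun x hx ↦ ?_⟩ <;> simp only [bword, length_flatten_replicate_append]
    · refine ih.flatten_replicate_append hE'.le hq hx.1 ⟨?_, ?_⟩ <;> rw [c₁] <;>
        linarith [hx.1, hx.2]
    · refine ih.flatten_replicate_append hE'.le hq (by linarith [hx.1]) ⟨?_, ?_⟩ <;> rw [c₂] <;>
        linarith [hx.1, hx.2]

end Words

end MinusContinuedFraction

open MinusContinuedFraction in
theorem bword_letters_eq_psi_general
    (β : ℝ) (h0 : 0 < β) (h1 : β < 1) (hirr : Irrational β)
    (k : ℕ) (j : ℕ) (hj1 : 1 ≤ j) (hj2 : j ≤ (ell β k).1) :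
    (bword β k).1.getD (j - 1) 0 =
      (if Int.fract (((j : ℝ) - 1) * β) ∈ Set.Ico (1 - β) 1 then 1 else 0) := by
  have hlen : j - 1 < (bword β k).1.length := by
    rw [← congrArg Prod.fst (length_bword k)] at hj2
    omega
  have hgap : 0 < eps β k - eps β (k + 1) := sub_pos.2 (eps_succ_lt h0 h1 hirr k)
  rw [(codesRotation_bword h0 h1 hirr k).1 0 ⟨le_rfl, hgap⟩, getD_coding hlen, codingLetter,
    Nat.cast_sub hj1, Nat.cast_one, zero_add]

theorem bword_letters_eq_psi
    (β : ℝ) (h0 : 0 < β) (h1 : β < 1) (hirr : Irrational β)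
    (k : ℕ) (hk : 1 ≤ k) (j : ℕ) (hj1 : 1 ≤ j) (hj2 : j ≤ (ell β k).1) :
    (bword β k).1.getD (j - 1) 0 =
      (if Int.fract (((j : ℝ) - 1) * β) ∈ Set.Ico (1 - β) 1 then 1 else 0) :=
  bword_letters_eq_psi_general β h0 h1 hirr k j hj1 hj2
end

section
/- Let α ∈ (0,1/2) be irrational. Then for every k ≥ 1: ∫_0^1 Ψ_{ℓ_k(0)}(x) dx ≥ (1/(4·ℓ_k(0))) · ∑_{ν∈ℤ} U_k^{(1)}(ν)². -/
/-!
Write `N = ℓ_k(0)`, `L = ℓ_k(1)` and `δ = 1/(2N)`. By the cocycle identity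
`φ_{m+j}(0) - φ_m(0) = φ_j(mα)`, the sum `∑_ν U_k^{(1)}(ν)²` counts the pairs `m, n ∈ [1, L]` with
`φ_m(0) = φ_n(0)`, hence is at most twice the number of pairs `(j, m)` with `j < L`, `m + j ≤ L`
and `φ_j(mα) = 0`. In the lattice basis of two consecutive convergents of the minus continued
fraction of `2α`, one gets `|h·2α - p| ≥ 1/N` for `1 ≤ h < L`. Thus the points `mα` are
`δ`-separated modulo `1` and stay `δ`-far from `ℤ/2` along `j` steps, so `φ_j` vanishes on
the disjoint intervals `[{mα}, {mα} + δ)`: each such pair contributes `δ` to the measure of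
`{φ_j = 0}`, and `∫ Ψ_N = ∑_{j < N} |{φ_j = 0}|` with `L ≤ N`.
-/

open MeasureTheory

/-- The discrepancy cocycle `φ_n(x) = ∑_{k<n} φ(x + kα)`. -/
noncomputable def phiN (α : ℝ) (n : ℕ) (x : ℝ) : ℤ :=
  ∑ k ∈ Finset.range n, phi (x + k * α)

/-- `Ψ_n(x) = #{0 ≤ k ≤ n−1 : φ_k(x) = 0}`. -/
noncomputable def Psi (α : ℝ) (n : ℕ) (x : ℝ) : ℕ :=
  ((Finset.range n).filter (fun k => phiN α k x = 0)).card

/-- Visit distribution: `U_k^{(i)}(ν) = #{1 ≤ n ≤ ℓ_k(i) : φ_n(0) = ν}` (data from `β = 2α`). -/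
noncomputable def visitU (α : ℝ) (k : ℕ) (i : ℕ) (ν : ℤ) : ℕ :=
  ((Finset.Icc 1 (if i = 0 then (ell (2*α) k).1 else (ell (2*α) k).2)).filter
    (fun n => phiN α n 0 = ν)).card

lemma ceil_sub_mem_Ioo {y : ℝ} (hy : Irrational y) : (⌈y⌉ : ℝ) - y ∈ Set.Ioo 0 1 :=
  ⟨sub_pos.2 ((Int.le_ceil y).lt_of_ne (hy.ne_int _)), by linarith [Int.ceil_lt_add_one y]⟩

/-- Writing `(h, p) = x (u, a) + y (v, b)` gives `h β - p = x (u β - a) + y (v β - b)`, and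
`0 < h < v` forces `x ≥ 1, y ≤ 0` or `x ≤ -1, y ≥ 1`. -/
lemma le_abs_mul_sub_of_det_eq_one {β : ℝ} {u v a b h p : ℤ} (hdet : u * b - v * a = 1)
    (hu : 0 ≤ u) (hua : 0 < u * β - a) (hvb : v * β - b ≤ 0) (hh : 0 < h) (hhv : h < v) :
    u * β - a ≤ |h * β - p| := by
  set x := b * h - v * p
  set y := u * p - a * h
  have hxy : x * u + y * v = h := by linear_combination h * hdet
  have hxyp : x * a + y * b = p := by linear_combination p * hdet
  have herr : (h : ℝ) * β - p = x * (u * β - a) + y * (v * β - b) := by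
    rw [← hxyp, ← hxy]; push_cast; ring
  rw [herr]
  rcases le_or_gt y 0 with hy | hy
  · have hx : 1 ≤ x := by nlinarith
    have hx' : (1 : ℝ) ≤ x := by exact_mod_cast hx
    have hy' : (y : ℝ) ≤ 0 := by exact_mod_cast hy
    refine le_trans ?_ (le_abs_self _)
    nlinarith
  · have hx : x ≤ -1 := by nlinarith
    have hx' : (x : ℝ) ≤ -1 := by exact_mod_cast hx
    have hy' : (0 : ℝ) < y := by exact_mod_cast hy
    refine le_trans ?_ (neg_le_abs _)
    nlinarith

namespace MinusCF

variable {β : ℝ}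

lemma irrational_betaSeq (hβ : Irrational β) : ∀ k, Irrational (betaSeq β k)
  | 0 => hβ
  | k + 1 => by
    simpa only [betaSeq, one_div] using (irrational_betaSeq hβ k).inv.intCast_sub _

lemma betaSeq_mem_Ioo (hβ : Irrational β) (hβ0 : 0 < β) (hβ1 : β < 1) :
    ∀ k, betaSeq β k ∈ Set.Ioo 0 1
  | 0 => ⟨hβ0, hβ1⟩
  | k + 1 => by
    simpa only [betaSeq, one_div] using ceil_sub_mem_Ioo (irrational_betaSeq hβ k).inv

lemma two_le_nDigit (hβ : Irrational β) (hβ0 : 0 < β) (hβ1 : β < 1) (k : ℕ) :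
    2 ≤ nDigit β k := by
  obtain ⟨hpos, hlt⟩ := betaSeq_mem_Ioo hβ hβ0 hβ1 k
  have : (1 : ℝ) < 1 / betaSeq β k := by rw [lt_div_iff₀ hpos]; linarith
  have : (1 : ℤ) < nDigit β k := Int.lt_ceil.2 (by exact_mod_cast this)
  omega

/-- `(q_k, q_{k-1})`, denominators of the convergents `p_k / q_k` of the minus continued fraction. -/
noncomputable def den (β : ℝ) : ℕ → ℤ × ℤ
  | 0 => (1, 0)
  | k + 1 => (nDigit β k * (den β k).1 - (den β k).2, (den β k).1)

/-- `(p_k, p_{k-1})`. -/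
noncomputable def num (β : ℝ) : ℕ → ℤ × ℤ
  | 0 => (0, -1)
  | k + 1 => (nDigit β k * (num β k).1 - (num β k).2, (num β k).1)

lemma den_snd_nonneg_lt (hβ : Irrational β) (hβ0 : 0 < β) (hβ1 : β < 1) :
    ∀ k, 0 ≤ (den β k).2 ∧ (den β k).2 < (den β k).1
  | 0 => by simp [den]
  | k + 1 => by
    obtain ⟨h0, hlt⟩ := den_snd_nonneg_lt hβ hβ0 hβ1 k
    have := two_le_nDigit hβ hβ0 hβ1 k
    exact ⟨by simp only [den]; omega, by simp only [den]; nlinarith⟩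

lemma ell_eq_den (hβ : Irrational β) (hβ0 : 0 < β) (hβ1 : β < 1) :
    ∀ k, ((ell β k).1 : ℤ) = (den β k).1 ∧ ((ell β k).2 : ℤ) = (den β k).1 - (den β k).2
  | 0 => by simp [ell, den]
  | k + 1 => by
    obtain ⟨h1, h2⟩ := ell_eq_den hβ hβ0 hβ1 k
    have := two_le_nDigit hβ hβ0 hβ1 k
    simp only [ell, den]
    push_cast
    rw [Int.toNat_of_nonneg (by omega), Int.toNat_of_nonneg (by omega), h1, h2]
    constructor <;> ring

lemma den_snd_mul_num_sub : ∀ k, (den β k).2 * (num β k).1 - (den β k).1 * (num β k).2 = 1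
  | 0 => by simp [den, num]
  | k + 1 => by
    simp only [den, num]
    linear_combination den_snd_mul_num_sub k

lemma den_mul_sub_num (hβ : Irrational β) (hβ0 : 0 < β) (hβ1 : β < 1) :
    ∀ k, 0 < (den β k).2 * β - (num β k).2 ∧
      (den β k).1 * β - (num β k).1 = betaSeq β k * ((den β k).2 * β - (num β k).2)
  | 0 => by simp [den, num, betaSeq]
  | k + 1 => by
    obtain ⟨hpos, heq⟩ := den_mul_sub_num hβ hβ0 hβ1 k
    have hβk := betaSeq_mem_Ioo hβ hβ0 hβ1 k
    refine ⟨by simp only [den, num]; rw [heq]; exact mul_pos hβk.1 hpos, ?_⟩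
    have hinv : 1 / betaSeq β k * betaSeq β k = 1 := one_div_mul_cancel hβk.1.ne'
    simp only [den, num, betaSeq, nDigit]
    push_cast
    rw [heq]
    linear_combination (⌈1 / betaSeq β k⌉ : ℝ) * heq + ((den β k).2 * β - (num β k).2) * hinv

lemma one_le_den_mul (hβ : Irrational β) (hβ0 : 0 < β) (hβ1 : β < 1) (k : ℕ) :
    1 ≤ (den β k).1 * ((den β k).2 * β - (num β k).2) := by
  obtain ⟨hpos, heq⟩ := den_mul_sub_num hβ hβ0 hβ1 k
  have hq : (0 : ℝ) ≤ (den β k).2 := by exact_mod_cast (den_snd_nonneg_lt hβ hβ0 hβ1 k).1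
  have hdet : ((den β k).2 : ℝ) * (num β k).1 - (den β k).1 * (num β k).2 = 1 := by
    exact_mod_cast den_snd_mul_num_sub k
  have hβk := (betaSeq_mem_Ioo hβ hβ0 hβ1 k).1
  have : 0 ≤ ((den β k).2 : ℝ) * ((den β k).1 * β - (num β k).1) := by
    rw [heq]; positivity
  linarith

lemma one_div_le_abs_mul_sub (hβ : Irrational β) (hβ0 : 0 < β) (hβ1 : β < 1) (k : ℕ) {h : ℕ}
    (hh : 1 ≤ h) (hhL : h < (ell β k).2) (p : ℤ) :
    1 / ((ell β k).1 : ℝ) ≤ |h * β - p| := by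
  obtain ⟨hN, hL⟩ := ell_eq_den hβ hβ0 hβ1 k
  obtain ⟨hpos, heq⟩ := den_mul_sub_num hβ hβ0 hβ1 k
  obtain ⟨hq0, hqq⟩ := den_snd_nonneg_lt hβ hβ0 hβ1 k
  have hdet : (den β k).2 * ((num β k).1 - (num β k).2)
      - ((den β k).1 - (den β k).2) * (num β k).2 = 1 := by
    linear_combination den_snd_mul_num_sub (β := β) k
  have hvb : (((den β k).1 - (den β k).2 : ℤ) : ℝ) * β - ((num β k).1 - (num β k).2 : ℤ) ≤ 0 := by
    push_cast
    nlinarith [(betaSeq_mem_Ioo hβ hβ0 hβ1 k).2]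
  have hgap := le_abs_mul_sub_of_det_eq_one (h := h) (p := p) hdet hq0 hpos hvb
    (by omega) (by omega)
  push_cast at hgap
  have hq : (0 : ℝ) < (den β k).1 := by exact_mod_cast hq0.trans_lt hqq
  have hqN : ((ell β k).1 : ℝ) = (den β k).1 := by exact_mod_cast hN
  rw [hqN, div_le_iff₀ hq, mul_comm]
  exact (one_le_den_mul hβ hβ0 hβ1 k).trans (mul_le_mul_of_nonneg_left hgap hq.le)

lemma one_le_ell_fst (hβ : Irrational β) (hβ0 : 0 < β) (hβ1 : β < 1) (k : ℕ) :
    1 ≤ (ell β k).1 := by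
  have := ell_eq_den hβ hβ0 hβ1 k
  have := den_snd_nonneg_lt hβ hβ0 hβ1 k
  omega

lemma ell_snd_le_fst (hβ : Irrational β) (hβ0 : 0 < β) (hβ1 : β < 1) (k : ℕ) :
    (ell β k).2 ≤ (ell β k).1 := by
  have := ell_eq_den hβ hβ0 hβ1 k
  have := den_snd_nonneg_lt hβ hβ0 hβ1 k
  omega

end MinusCF

lemma phi_eq_ite_even (x : ℝ) : phi x = if Even ⌊2 * x⌋ then 1 else -1 := by
  rcases Int.even_or_odd' ⌊2 * x⌋ with ⟨a, ha | ha⟩ <;>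
  · obtain ⟨hlo, hhi⟩ := Int.floor_eq_iff.1 ha
    have hfl : ⌊x⌋ = a := Int.floor_eq_iff.2 ⟨by push_cast at hlo hhi; linarith,
      by push_cast at hlo hhi; linarith⟩
    push_cast at hlo hhi
    simp only [phi, Int.fract, hfl, ha, Int.even_add_one, even_two_mul, not_true_eq_false,
      ↓reduceIte]
    split_ifs <;> first | rfl | linarith

lemma phi_add_eq {z t δ : ℝ} (hz : ∀ p : ℤ, δ ≤ |z - p / 2|) (ht : t ∈ Set.Ico 0 δ) :
    phi (z + t) = phi z := by
  have hfar := hz (⌊2 * z⌋ + 1)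
  have hlt := Int.lt_floor_add_one (2 * z)
  rw [abs_of_neg (by push_cast; linarith)] at hfar
  have : ⌊2 * (z + t)⌋ = ⌊2 * z⌋ := Int.floor_eq_iff.2
    ⟨by linarith [Int.floor_le (2 * z), ht.1], by push_cast at hfar; linarith [ht.2]⟩
  rw [phi_eq_ite_even, phi_eq_ite_even, this]

lemma phiN_add_eq {α x t δ : ℝ} {j : ℕ} (hx : ∀ i < j, ∀ p : ℤ, δ ≤ |x + i * α - p / 2|)
    (ht : t ∈ Set.Ico 0 δ) : phiN α j (x + t) = phiN α j x :=
  Finset.sum_congr rfl fun i hi => by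
    rw [add_right_comm]; exact phi_add_eq (hx i (Finset.mem_range.1 hi)) ht

lemma phiN_add_intCast (α : ℝ) (j : ℕ) (x : ℝ) (z : ℤ) : phiN α j (x + z) = phiN α j x :=
  Finset.sum_congr rfl fun i _ => by
    rw [add_right_comm, phi, phi, Int.fract_add_intCast]

lemma phiN_add (α : ℝ) (a b : ℕ) (x : ℝ) :
    phiN α (a + b) x = phiN α a x + phiN α b (x + a * α) := by
  simp only [phiN, Finset.sum_range_add, Nat.cast_add, add_mul, add_assoc]

lemma measurable_phiN (α : ℝ) (j : ℕ) : Measurable (phiN α j) := by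
  have : Measurable phi := Measurable.ite (measurableSet_lt measurable_fract measurable_const)
    measurable_const measurable_const
  exact Finset.measurable_sum _ fun i _ => this.comp (measurable_id.add_const _)

lemma volume_inter_Ico_eq_of_periodic {A : Set ℝ} (hA : MeasurableSet A)
    (hper : ∀ (z : ℤ) (x : ℝ), x + z ∈ A ↔ x ∈ A) (c : ℝ) :
    volume (A ∩ Set.Ico c (c + 1)) = volume (A ∩ Set.Ico 0 1) := by
  have hinv : ∀ g : AddSubgroup.zmultiples (1 : ℝ), (fun x => g +ᵥ x) ⁻¹' A = A := by
    rintro ⟨g, hg⟩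
    obtain ⟨n, rfl⟩ := AddSubgroup.mem_zmultiples_iff.1 hg
    ext x
    simp [add_comm, hper]
  have hfd (t : ℝ) := isAddFundamentalDomain_Ioc one_pos t (μ := volume)
  calc volume (A ∩ Set.Ico c (c + 1)) = volume (A ∩ Set.Ioc c (c + 1)) :=
        measure_congr (Filter.EventuallyEq.rfl.inter Ico_ae_eq_Ioc)
    _ = volume (A ∩ Set.Ioc 0 (0 + 1)) := (hfd c).measure_set_eq (hfd 0) hA hinv
    _ = volume (A ∩ Set.Ico 0 1) := by
        rw [zero_add]; exact measure_congr (Filter.EventuallyEq.rfl.inter Ico_ae_eq_Ioc).symm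

/-- Shifting the window to `[min y, min y + 1)` makes the intervals `[y i, y i + δ)` fit inside it
without wrapping around. -/
lemma card_mul_le_volume_real_of_separated {ι : Type*} {A : Set ℝ} (hA : MeasurableSet A)
    (hper : ∀ (z : ℤ) (x : ℝ), x + z ∈ A ↔ x ∈ A) {s : Finset ι} {y : ι → ℝ} {δ : ℝ}
    (hδ0 : 0 ≤ δ) (hδ1 : δ ≤ 1) (hy : ∀ i ∈ s, y i ∈ Set.Ico 0 1)
    (hsep : ∀ i ∈ s, ∀ j ∈ s, i ≠ j → ∀ p : ℤ, δ ≤ |y i - y j - p|)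
    (hsub : ∀ i ∈ s, Set.Ico (y i) (y i + δ) ⊆ A) :
    s.card * δ ≤ volume.real (A ∩ Set.Ico 0 1) := by
  rcases s.eq_empty_or_nonempty with rfl | hs
  · simp [measureReal_nonneg]
  obtain ⟨i₀, hi₀, hmin⟩ := s.exists_min_image y hs
  have hwin : ∀ i ∈ s, Set.Ico (y i) (y i + δ) ⊆ Set.Ico (y i₀) (y i₀ + 1) := by
    intro i hi
    refine Set.Ico_subset_Ico (hmin i hi) ?_
    by_cases h : i = i₀
    · rw [h]; linarith
    · have hfar := hsep i hi i₀ hi₀ h 1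
      rw [abs_of_neg (by push_cast; linarith [(hy i hi).2, (hy i₀ hi₀).1])] at hfar
      push_cast at hfar
      linarith
  have hdisj : (s : Set ι).PairwiseDisjoint fun i => Set.Ico (y i) (y i + δ) := by
    intro i hi j hj hij
    have hfar := hsep i hi j hj hij 0
    rw [Int.cast_zero, sub_zero, le_abs'] at hfar
    rw [Function.onFun, Set.Ico_disjoint_Ico, min_le_iff, le_max_iff, le_max_iff]
    rcases hfar with h | h
    · exact Or.inl (Or.inr (by linarith))
    · exact Or.inr (Or.inl (by linarith))
  calc s.card * δ = ∑ i ∈ s, volume.real (Set.Ico (y i) (y i + δ)) := by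
        simp [hδ0]
    _ = volume.real (⋃ i ∈ s, Set.Ico (y i) (y i + δ)) :=
        (measureReal_biUnion_finset hdisj (fun _ _ => measurableSet_Ico)
          fun _ _ => measure_Ico_lt_top.ne).symm
    _ ≤ volume.real (A ∩ Set.Ico (y i₀) (y i₀ + 1)) :=
        measureReal_mono (Set.iUnion₂_subset fun i hi => Set.subset_inter (hsub i hi) (hwin i hi))
          ((measure_mono Set.inter_subset_right).trans_lt measure_Ico_lt_top).ne
    _ = volume.real (A ∩ Set.Ico 0 1) := by
        rw [measureReal_def, measureReal_def, volume_inter_Ico_eq_of_periodic hA hper]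

section PairCounting

open Finset

variable {ι κ : Type*} [DecidableEq κ] (S : Finset ι) (f : ι → κ)

lemma sum_sq_card_fiber_eq_card_pairs :
    ∑ b ∈ S.image f, #{a ∈ S | f a = b} ^ 2 = #{p ∈ S ×ˢ S | f p.1 = f p.2} := by
  rw [card_eq_sum_card_fiberwise (f := fun p => f p.1) (t := S.image f)
    fun p hp => mem_image_of_mem f (mem_product.1 (mem_filter.1 hp).1).1]
  refine sum_congr rfl fun b _ => ?_
  rw [sq, ← card_product]
  congr 1
  ext ⟨a, a'⟩
  simp only [mem_filter, mem_product]
  constructor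
  · rintro ⟨⟨ha, hb⟩, ha', hb'⟩
    exact ⟨⟨⟨ha, ha'⟩, hb.trans hb'.symm⟩, hb⟩
  · rintro ⟨⟨⟨ha, ha'⟩, hf⟩, hb⟩
    exact ⟨⟨ha, hb⟩, ha', hf.symm.trans hb⟩

lemma tsum_sq_card_fiber_eq_card_pairs :
    ∑' b, (#{a ∈ S | f a = b} : ℝ) ^ 2 = #{p ∈ S ×ˢ S | f p.1 = f p.2} := by
  rw [tsum_eq_sum (s := S.image f) fun b hb => by
    simpa [filter_eq_empty_iff] using fun a ha hab => hb (mem_image.2 ⟨a, ha, hab⟩)]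
  exact_mod_cast sum_sq_card_fiber_eq_card_pairs S f

lemma card_pairs_le_two_mul_card_ordered_pairs [LinearOrder ι] :
    #{p ∈ S ×ˢ S | f p.1 = f p.2} ≤ 2 * #{p ∈ S ×ˢ S | p.1 ≤ p.2 ∧ f p.1 = f p.2} := by
  rw [← card_filter_add_card_filter_not (p := fun p : ι × ι => p.1 ≤ p.2), filter_filter,
    filter_filter, two_mul]
  gcongr ?_ + ?_
  · simp only [and_comm, le_refl]
  · refine card_le_card_of_injOn Prod.swap (fun p hp => ?_) Prod.swap_injective.injOn
    simp only [coe_filter, mem_product, Set.mem_ofPred_eq, Prod.fst_swap, Prod.snd_swap] at hp ⊢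
    exact ⟨hp.1.symm, (not_le.1 hp.2.2).le, hp.2.1.symm⟩

end PairCounting

section Orbit

open Finset

variable (α : ℝ)

lemma phiN_eq_phiN_iff {m n : ℕ} (h : m ≤ n) :
    phiN α m 0 = phiN α n 0 ↔ phiN α (n - m) (m * α) = 0 := by
  obtain ⟨j, rfl⟩ := Nat.exists_eq_add_of_le h
  rw [phiN_add, zero_add, Nat.add_sub_cancel_left]
  omega

/-- Since `φ_j(mα) = φ_{m+j}(0) - φ_m(0)`, this counts the returns of the orbit of `0` after `j`
steps inside the window `[1, L]`. -/
noncomputable def returnCount (L j : ℕ) : ℕ :=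
  #{m ∈ Icc 1 L | m + j ≤ L ∧ phiN α j (m * α) = 0}

lemma card_ordered_pairs_eq_sum_returnCount (L : ℕ) :
    #{p ∈ Icc 1 L ×ˢ Icc 1 L | p.1 ≤ p.2 ∧ phiN α p.1 0 = phiN α p.2 0}
      = ∑ j ∈ range L, returnCount α L j := by
  have hsum : ∑ j ∈ range L, returnCount α L j
      = #{q ∈ range L ×ˢ Icc 1 L | q.2 + q.1 ≤ L ∧ phiN α q.1 (q.2 * α) = 0} := by
    simp only [returnCount, card_filter, sum_product]
  rw [hsum]
  refine card_nbij' (fun p => (p.2 - p.1, p.1)) (fun q => (q.2, q.2 + q.1)) ?_ ?_ ?_ ?_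
  · rintro ⟨m, n⟩ hp
    simp only [coe_filter, mem_product, mem_Icc, mem_range, Set.mem_ofPred_eq] at hp ⊢
    exact ⟨⟨by omega, hp.1.1⟩, by omega, (phiN_eq_phiN_iff α hp.2.1).1 hp.2.2⟩
  · rintro ⟨j, m⟩ hq
    simp only [coe_filter, mem_product, mem_Icc, mem_range, Set.mem_ofPred_eq] at hq ⊢
    refine ⟨⟨hq.1.2, by omega, hq.2.1⟩, by omega, ?_⟩
    rw [phiN_eq_phiN_iff α (by omega), Nat.add_sub_cancel_left]
    exact hq.2.2
  · rintro ⟨m, n⟩ hp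
    simp only [mem_coe, mem_filter] at hp
    exact Prod.ext rfl (Nat.add_sub_of_le hp.2.1)
  · rintro ⟨j, m⟩ _
    simp

lemma returnCount_mul_le {δ : ℝ} {L : ℕ} (hδ0 : 0 ≤ δ) (hδ1 : δ ≤ 1)
    (hgap : ∀ h : ℕ, 1 ≤ h → h < L → ∀ p : ℤ, δ ≤ |h * α - p / 2|) (j : ℕ) :
    returnCount α L j * δ ≤ volume.real ({x | phiN α j x = 0} ∩ Set.Ico 0 1) := by
  have hsep : ∀ m m' : ℕ, 1 ≤ m' → m' < m → m ≤ L → ∀ p : ℤ,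
      δ ≤ |Int.fract (m * α) - Int.fract (m' * α) - p| := by
    intro m m' hm' hlt hm p
    convert hgap (m - m') (by omega) (by omega) (2 * (⌊m * α⌋ - ⌊m' * α⌋ + p)) using 2
    simp only [Int.fract]
    push_cast [Nat.cast_sub hlt.le]
    ring
  refine card_mul_le_volume_real_of_separated (y := fun m : ℕ => Int.fract (m * α))
    (measurable_phiN α j (measurableSet_singleton 0))
    (fun z x => by simp only [Set.mem_preimage, phiN_add_intCast]) hδ0 hδ1
    (fun m _ => ⟨Int.fract_nonneg _, Int.fract_lt_one _⟩) ?_ ?_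
  · intro m hm m' hm' hne p
    simp only [mem_filter, mem_Icc] at hm hm'
    rcases lt_or_gt_of_ne hne with hlt | hlt
    · convert hsep m' m hm.1.1 hlt hm'.1.2 (-p) using 1
      rw [← abs_neg]; push_cast; ring_nf
    · exact hsep m m' hm'.1.1 hlt hm.1.2 p
  · intro m hm x hx
    simp only [mem_filter, mem_Icc] at hm
    have ht : x - Int.fract (m * α) ∈ Set.Ico 0 δ := ⟨by linarith [hx.1], by linarith [hx.2]⟩
    have hx' : x = m * α + (x - Int.fract (m * α)) + ((-⌊m * α⌋ : ℤ) : ℝ) := by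
      rw [Int.fract]; push_cast; ring
    rw [Set.mem_preimage, Set.mem_singleton_iff, hx', phiN_add_intCast, phiN_add_eq _ ht, hm.2.2]
    intro i hi p
    have := hgap (m + i) (by omega) (by omega) p
    rwa [Nat.cast_add, add_mul] at this

lemma tsum_sq_card_visits_le {δ : ℝ} {L : ℕ} (hδ0 : 0 ≤ δ) (hδ1 : δ ≤ 1)
    (hgap : ∀ h : ℕ, 1 ≤ h → h < L → ∀ p : ℤ, δ ≤ |h * α - p / 2|) :
    δ * ∑' ν : ℤ, (#{n ∈ Icc 1 L | phiN α n 0 = ν} : ℝ) ^ 2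
      ≤ 2 * ∑ j ∈ range L, volume.real ({x | phiN α j x = 0} ∩ Set.Ico 0 1) := by
  have hpairs := card_pairs_le_two_mul_card_ordered_pairs (Icc 1 L) (fun n => phiN α n 0)
  rw [card_ordered_pairs_eq_sum_returnCount] at hpairs
  rw [tsum_sq_card_fiber_eq_card_pairs]
  calc δ * #{p ∈ Icc 1 L ×ˢ Icc 1 L | phiN α p.1 0 = phiN α p.2 0}
      ≤ δ * (2 * ∑ j ∈ range L, returnCount α L j) := by gcongr; exact_mod_cast hpairs
    _ = 2 * ∑ j ∈ range L, returnCount α L j * δ := by push_cast; rw [← sum_mul]; ring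
    _ ≤ 2 * ∑ j ∈ range L, volume.real ({x | phiN α j x = 0} ∩ Set.Ico 0 1) := by
        gcongr with j
        exact returnCount_mul_le α hδ0 hδ1 hgap j

lemma integral_Psi (N : ℕ) :
    ∫ x in Set.Ico (0 : ℝ) 1, (Psi α N x : ℝ)
      = ∑ j ∈ range N, volume.real ({x | phiN α j x = 0} ∩ Set.Ico 0 1) := by
  have hA (j : ℕ) : MeasurableSet {x | phiN α j x = 0} :=
    measurable_phiN α j (measurableSet_singleton 0)
  have hPsi (x : ℝ) : (Psi α N x : ℝ) = ∑ j ∈ range N, {x | phiN α j x = 0}.indicator 1 x := by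
    simp only [Psi, card_filter, Nat.cast_sum, Nat.cast_ite, Nat.cast_one, Nat.cast_zero,
      Set.indicator_apply, Set.mem_ofPred_eq, Pi.one_apply]
  simp only [hPsi]
  rw [integral_finsetSum]
  · refine sum_congr rfl fun j _ => ?_
    rw [integral_indicator_one (hA j), measureReal_restrict_apply (hA j)]
  · exact fun j _ => (integrableOn_const measure_Ico_lt_top.ne).indicator (hA j)

end Orbit

theorem visit_distribution_lower_bound_general
    (α : ℝ) (h0 : 0 < α) (h1 : α < 1/2) (hirr : Irrational α)
    (k : ℕ) :
    (1 / (4 * ((ell (2*α) k).1 : ℝ))) * ∑' ν : ℤ, ((visitU α k 1 ν : ℝ))^2 ≤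
      ∫ x in Set.Ico (0:ℝ) 1, (Psi α (ell (2*α) k).1 x : ℝ) := by
  set N := (ell (2 * α) k).1
  set L := (ell (2 * α) k).2
  have hβ : Irrational (2 * α) := by exact_mod_cast hirr.natCast_mul two_ne_zero
  have hβ0 : 0 < 2 * α := by linarith
  have hβ1 : 2 * α < 1 := by linarith
  have hN1 : (1 : ℝ) ≤ N := by exact_mod_cast MinusCF.one_le_ell_fst hβ hβ0 hβ1 k
  have hgap (h : ℕ) (hh : 1 ≤ h) (hhL : h < L) (p : ℤ) : 1 / (2 * N) ≤ |h * α - p / 2| := by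
    have := MinusCF.one_div_le_abs_mul_sub hβ hβ0 hβ1 k hh hhL p
    rw [show (h : ℝ) * (2 * α) - p = 2 * (h * α - p / 2) by ring, abs_mul, abs_two] at this
    calc 1 / (2 * (N : ℝ)) = 1 / N / 2 := by ring
      _ ≤ |h * α - p / 2| := by linarith
  have hvisits := tsum_sq_card_visits_le α (by positivity) (by
    rw [div_le_one (by positivity)]; linarith) hgap
  have hU (ν : ℤ) : visitU α k 1 ν = ((Finset.Icc 1 L).filter (phiN α · 0 = ν)).card := by
    simp [visitU, L]
  calc _ = (1 / (2 * N) * ∑' ν : ℤ, (visitU α k 1 ν : ℝ) ^ 2) / 2 := by ring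
    _ ≤ ∑ j ∈ Finset.range L, volume.real ({x | phiN α j x = 0} ∩ Set.Ico 0 1) := by
        simp only [hU]; linarith
    _ ≤ ∫ x in Set.Ico (0 : ℝ) 1, (Psi α N x : ℝ) := by
        rw [integral_Psi]
        exact Finset.sum_le_sum_of_subset_of_nonneg
          (Finset.range_subset_range.2 (MinusCF.ell_snd_le_fst hβ hβ0 hβ1 k))
          fun _ _ _ => measureReal_nonneg

theorem visit_distribution_lower_bound
    (α : ℝ) (h0 : 0 < α) (h1 : α < 1/2) (hirr : Irrational α)
    (k : ℕ) (hk : 1 ≤ k) :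
    (1 / (4 * ((ell (2*α) k).1 : ℝ))) * ∑' ν : ℤ, ((visitU α k 1 ν : ℝ))^2 ≤
      ∫ x in Set.Ico (0:ℝ) 1, (Psi α (ell (2*α) k).1 x : ℝ) :=
  visit_distribution_lower_bound_general α h0 h1 hirr k
end

section
/- Let α ∈ (0,1/2) be irrational. Then for every k ≥ 1, the parity vector (ε_k(0), ε_k(1)) belongs to {(0,1), (1,0), (1,1)}, and moreover: if (ε_k(0),ε_k(1)) = (0,1) then s_k(0) = 1; if (ε_k(0),ε_k(1)) = (1,0) then s_k(1) = 1; and if (ε_k(0),ε_k(1)) = (1,1) then s_k(0) − s_k(1) = 1. -/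
/-- Parities `(ε_k(0), ε_k(1))`: the sums of the letters of `b_k(0)`, `b_k(1)` mod 2. -/
noncomputable def eps (β : ℝ) (k : ℕ) : ℕ × ℕ :=
  ((bword β k).1.sum % 2, (bword β k).2.sum % 2)

/-- Position `s_k(i) = ∑_{j=0}^{ℓ−1} φ({jα})` where `ℓ = ℓ_k(i)`. -/
noncomputable def sPos (α : ℝ) (ℓ : ℕ) : ℤ :=
  ∑ j ∈ Finset.range ℓ, phi (Int.fract ((j : ℝ) * α))

/-!
Put `β = 2α`. Since `φ({jα}) = (-1)^⌊jβ⌋`, the positions are the sign sums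
`s_k(i) = ∑_{j < ℓ_k(i)} (-1)^⌊jβ⌋`.

Let `q, r` be the lengths `ℓ_k(0), ℓ_k(1)`, let `p, s` be the numbers of ones in `b_k(0)`,
`b_k(1)`, and `D_k = β_0 ⋯ β_{k-1}`. By induction on `k`: `qβ - p = D_{k+1}`,
`rβ - s = D_{k+1} - D_k`, `{jβ} ≤ 1 - D_k + D_{k+1}` for `j < q` and `{jβ} ≤ 1 - D_k` for
`j < r`. The index range of level `k+1` consists of blocks of length `q` followed by one block of
length `r`, and these bounds say that shifting an index by `t·q` shifts `⌊jβ⌋` by exactly `t·p`.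
So the sign sums of level `k+1` are explicit combinations of those of level `k`, and a parity case
analysis carries the claim from `k` to `k+1`, starting at `k = 0`.
-/

open Finset

namespace MinusCF

lemma phi_eq_negOnePow (x : ℝ) : phi x = ⌊2 * x⌋.negOnePow := by
  have hx : 2 * x = ((2 * ⌊x⌋ : ℤ) : ℝ) + 2 * Int.fract x := by
    push_cast; linarith [Int.floor_add_fract x]
  rw [phi, hx, Int.floor_intCast_add]
  rcases lt_or_ge (Int.fract x) (1 / 2) with h | h
  · have : ⌊2 * Int.fract x⌋ = 0 :=
      Int.floor_eq_zero_iff.mpr ⟨by linarith [Int.fract_nonneg x], by linarith⟩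
    rw [if_pos h, this, add_zero, Int.negOnePow_two_mul, Units.val_one]
  · have : ⌊2 * Int.fract x⌋ = 1 := by
      rw [Int.floor_eq_iff]; push_cast; constructor <;> linarith [Int.fract_lt_one x]
    rw [if_neg (not_lt.mpr h), this, Int.negOnePow_two_mul_add_one, Units.val_neg, Units.val_one]

noncomputable def signSum (β : ℝ) (ℓ : ℕ) : ℤ :=
  ∑ j ∈ range ℓ, (⌊(j : ℝ) * β⌋.negOnePow : ℤ)

lemma sPos_eq_signSum (α : ℝ) (ℓ : ℕ) : sPos α ℓ = signSum (2 * α) ℓ := by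
  refine sum_congr rfl fun j _ => ?_
  rw [phi, Int.fract_fract, ← phi, phi_eq_negOnePow, mul_left_comm]

lemma sum_range_mul_eq {f g : ℕ → ℤ} {q : ℕ} :
    ∀ {M : ℕ}, (∀ t < M, ∀ i < q, f (t * q + i) = g t * f i) →
      ∑ j ∈ range (M * q), f j = (∑ t ∈ range M, g t) * ∑ i ∈ range q, f i
  | 0, _ => by simp
  | M + 1, hf => by
    rw [add_mul, one_mul, sum_range_add, sum_range_mul_eq fun t ht => hf t (by omega),
      sum_range_succ, add_mul, sum_congr rfl fun i hi => hf M (by omega) i (mem_range.mp hi),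
      ← mul_sum]

lemma sum_range_mul_add_eq {f g : ℕ → ℤ} {q r M : ℕ}
    (hq : ∀ t < M, ∀ i < q, f (t * q + i) = g t * f i)
    (hr : ∀ i < r, f (M * q + i) = g M * f i) :
    ∑ j ∈ range (M * q + r), f j =
      (∑ t ∈ range M, g t) * ∑ i ∈ range q, f i + g M * ∑ i ∈ range r, f i := by
  rw [sum_range_add, sum_range_mul_eq hq, sum_congr rfl fun i hi => hr i (mem_range.mp hi),
    ← mul_sum]

def ParitySigns (p s : ℕ) (a b : ℤ) : Prop :=
  (p % 2 = 0 ∧ s % 2 = 1 ∧ a = 1) ∨ (p % 2 = 1 ∧ s % 2 = 0 ∧ b = 1) ∨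
    (p % 2 = 1 ∧ s % 2 = 1 ∧ a - b = 1)

lemma ParitySigns.step {p s : ℕ} {a b : ℤ} (h : ParitySigns p s a b) (m : ℕ) :
    ParitySigns ((m + 1) * p + s) (m * p + s)
      ((∑ t ∈ range (m + 1), (-1) ^ (t * p)) * a + (-1) ^ ((m + 1) * p) * b)
      ((∑ t ∈ range m, (-1) ^ (t * p)) * a + (-1) ^ (m * p) * b) := by
  rcases Nat.even_or_odd p with hp | hp
  · have hsign : ∀ t : ℕ, (-1 : ℤ) ^ (t * p) = 1 := fun t => (hp.mul_left t).neg_one_pow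
    simp only [hsign, sum_const, card_range, nsmul_eq_mul, mul_one, one_mul]
    rw [Nat.even_iff] at hp
    rcases h with ⟨-, hs, ha⟩ | ⟨hp', -⟩ | ⟨hp', -⟩ <;> try omega
    refine Or.inr (Or.inr ⟨?_, ?_, ?_⟩)
    · simp [Nat.add_mod, Nat.mul_mod, hp, hs]
    · simp [Nat.add_mod, Nat.mul_mod, hp, hs]
    · rw [ha]; push_cast; ring
  · have hsign : ∀ t : ℕ, (-1 : ℤ) ^ (t * p) = (-1) ^ t := fun t => by
      rw [pow_mul', hp.neg_one_pow]
    simp only [hsign, neg_one_geom_sum]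
    simp only [neg_one_pow_eq_ite, Nat.even_add_one, Nat.even_iff]
    rw [Nat.odd_iff] at hp
    have hmod : ∀ M : ℕ, (M * p + s) % 2 = (M % 2 + s % 2) % 2 := fun M => by
      simp [Nat.add_mod, Nat.mul_mod, hp]
    simp only [ParitySigns, hmod, Nat.add_mod m 1]
    rcases h with ⟨hp', -⟩ | ⟨-, hs, hb⟩ | ⟨-, hs, hab⟩ <;> try omega
    all_goals rcases Nat.mod_two_eq_zero_or_one m with hm | hm <;> simp [hm, hs] <;> linarith

lemma floor_fract_mul_add {β D' : ℝ} {q p t i : ℕ} (hq : (q : ℝ) * β - p = D')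
    (h0 : 0 ≤ (t : ℝ) * D') (h1 : Int.fract ((i : ℝ) * β) + t * D' < 1) :
    ⌊((t * q + i : ℕ) : ℝ) * β⌋ = ((t * p : ℕ) : ℤ) + ⌊(i : ℝ) * β⌋ ∧
      Int.fract (((t * q + i : ℕ) : ℝ) * β) = Int.fract ((i : ℝ) * β) + t * D' := by
  have hx : ((t * q + i : ℕ) : ℝ) * β = (((t * p : ℕ) + ⌊(i : ℝ) * β⌋ : ℤ) : ℝ) +
      (Int.fract ((i : ℝ) * β) + t * D') := by
    push_cast
    linear_combination (t : ℝ) * hq - Int.floor_add_fract ((i : ℝ) * β)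
  have hmem : Int.fract ((i : ℝ) * β) + t * D' ∈ Set.Ico 0 1 :=
    ⟨by linarith [Int.fract_nonneg ((i : ℝ) * β)], h1⟩
  rw [hx, Int.floor_intCast_add, Int.floor_eq_zero_iff.mpr hmem, add_zero,
    Int.fract_intCast_add, Int.fract_eq_self.mpr hmem]
  exact ⟨rfl, rfl⟩

lemma exists_eq_mul_add {q r M j : ℕ} (hq : 0 < q) (hj : j < M * q + r) :
    ∃ t i, j = t * q + i ∧ ((t < M ∧ i < q) ∨ (t = M ∧ i < r)) := by
  by_cases h : j < M * q
  · exact ⟨j / q, j % q, (Nat.div_add_mod' j q).symm,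
      Or.inl ⟨(Nat.div_lt_iff_lt_mul hq).mpr h, Nat.mod_lt _ hq⟩⟩
  · exact ⟨M, j - M * q, by omega, Or.inr ⟨rfl, by omega⟩⟩

structure BlockApprox (β D D' : ℝ) (q r p s : ℕ) : Prop where
  q_pos : 0 < q
  q_mul_sub : (q : ℝ) * β - p = D'
  r_mul_sub : (r : ℝ) * β - s = D' - D
  fract_le_of_lt_q : ∀ j < q, Int.fract ((j : ℝ) * β) ≤ 1 - D + D'
  fract_le_of_lt_r : ∀ j < r, Int.fract ((j : ℝ) * β) ≤ 1 - D

namespace BlockApprox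

variable {β D D' : ℝ} {q r p s M t i : ℕ}

lemma fract_add_mul_le (A : BlockApprox β D D' q r p s) (hD' : 0 ≤ D')
    (h : (t < M ∧ i < q) ∨ (t = M ∧ i < r)) :
    Int.fract ((i : ℝ) * β) + t * D' ≤ 1 - D + M * D' := by
  rcases h with ⟨ht, hi⟩ | ⟨rfl, hi⟩
  · have : (t : ℝ) + 1 ≤ M := by exact_mod_cast ht
    nlinarith [A.fract_le_of_lt_q i hi]
  · linarith [A.fract_le_of_lt_r i hi]

lemma floor_fract_mul_add (A : BlockApprox β D D' q r p s) (hD' : 0 ≤ D') (hM : M * D' < D)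
    (h : (t < M ∧ i < q) ∨ (t = M ∧ i < r)) :
    ⌊((t * q + i : ℕ) : ℝ) * β⌋ = ((t * p : ℕ) : ℤ) + ⌊(i : ℝ) * β⌋ ∧
      Int.fract (((t * q + i : ℕ) : ℝ) * β) = Int.fract ((i : ℝ) * β) + t * D' :=
  MinusCF.floor_fract_mul_add A.q_mul_sub (by positivity) (by linarith [A.fract_add_mul_le hD' h])

lemma fract_le_of_lt_mul_add (A : BlockApprox β D D' q r p s) (hD' : 0 ≤ D') (hM : M * D' < D)
    {j : ℕ} (hj : j < M * q + r) : Int.fract ((j : ℝ) * β) ≤ 1 - D + M * D' := by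
  obtain ⟨t, i, rfl, h⟩ := exists_eq_mul_add A.q_pos hj
  rw [(A.floor_fract_mul_add hD' hM h).2]
  exact A.fract_add_mul_le hD' h

lemma signSum_mul_add (A : BlockApprox β D D' q r p s) (hD' : 0 ≤ D') (hM : M * D' < D) :
    signSum β (M * q + r) =
      (∑ t ∈ range M, (-1) ^ (t * p)) * signSum β q + (-1) ^ (M * p) * signSum β r := by
  have hf : ∀ t i, (t < M ∧ i < q) ∨ (t = M ∧ i < r) →
      (⌊((t * q + i : ℕ) : ℝ) * β⌋.negOnePow : ℤ) =
        (-1) ^ (t * p) * ⌊(i : ℝ) * β⌋.negOnePow := by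
    intro t i h
    rw [(A.floor_fract_mul_add hD' hM h).1, Int.negOnePow_add, Units.val_mul,
      Int.coe_negOnePow_natCast]
  exact sum_range_mul_add_eq (fun t ht i hi => by exact_mod_cast hf t i (Or.inl ⟨ht, hi⟩))
    (fun i hi => by exact_mod_cast hf M i (Or.inr ⟨rfl, hi⟩))

lemma step (A : BlockApprox β D D' q r p s) (hD' : 0 ≤ D') (m : ℕ) (hm : (m + 1) * D' < D) :
    BlockApprox β D' ((m + 2) * D' - D) ((m + 1) * q + r) (m * q + r) ((m + 1) * p + s)
      (m * p + s) where
  q_pos := by have := A.q_pos; positivity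
  q_mul_sub := by push_cast; linear_combination (m + 1 : ℝ) * A.q_mul_sub + A.r_mul_sub
  r_mul_sub := by push_cast; linear_combination (m : ℝ) * A.q_mul_sub + A.r_mul_sub
  fract_le_of_lt_q j hj := by
    have := A.fract_le_of_lt_mul_add hD' (M := m + 1) (by push_cast; exact hm) hj
    push_cast at this; linarith
  fract_le_of_lt_r j hj := by
    have := A.fract_le_of_lt_mul_add hD' (M := m) (by linarith) hj
    linarith

lemma paritySigns_step (A : BlockApprox β D D' q r p s) (hD' : 0 ≤ D') (m : ℕ)
    (hm : (m + 1) * D' < D) (h : ParitySigns p s (signSum β q) (signSum β r)) :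
    ParitySigns ((m + 1) * p + s) (m * p + s) (signSum β ((m + 1) * q + r))
      (signSum β (m * q + r)) := by
  rw [A.signSum_mul_add hD' (by push_cast; exact hm), A.signSum_mul_add hD' (by linarith)]
  exact h.step m

end BlockApprox

section Sequence

variable {β : ℝ}

lemma betaSeq_mem_Ioo_s8 (h0 : 0 < β) (h1 : β < 1) (hirr : Irrational β) (k : ℕ) :
    betaSeq β k ∈ Set.Ioo 0 1 ∧ Irrational (betaSeq β k) := by
  induction k with
  | zero => exact ⟨⟨h0, h1⟩, hirr⟩
  | succ k ih =>
    obtain ⟨⟨hpos, hlt⟩, hk⟩ := ih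
    have hinv : Irrational (1 / betaSeq β k) := by rw [one_div]; exact hk.inv
    have hceil : 1 / betaSeq β k < ⌈1 / betaSeq β k⌉ :=
      (Int.le_ceil _).lt_of_ne (hinv.ne_int _)
    refine ⟨⟨sub_pos.mpr hceil, ?_⟩, hinv.intCast_sub _⟩
    have hgt : 1 < 1 / betaSeq β k := by rw [lt_div_iff₀ hpos]; linarith
    simp only [betaSeq]
    linarith [Int.ceil_lt_add_one (1 / betaSeq β k)]

lemma exists_nDigit_eq (h0 : 0 < β) (h1 : β < 1) (hirr : Irrational β) (k : ℕ) :
    ∃ m : ℕ, nDigit β k = m + 2 := by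
  obtain ⟨⟨hpos, hlt⟩, -⟩ := betaSeq_mem_Ioo_s8 h0 h1 hirr k
  have : (1 : ℝ) < 1 / betaSeq β k := by rw [lt_div_iff₀ hpos]; linarith
  have : 1 < nDigit β k := Int.lt_ceil.mpr (by exact_mod_cast this)
  exact ⟨(nDigit β k - 2).toNat, by omega⟩

noncomputable def betaProd (β : ℝ) (k : ℕ) : ℝ := ∏ i ∈ range k, betaSeq β i

lemma betaProd_pos (h0 : 0 < β) (h1 : β < 1) (hirr : Irrational β) (k : ℕ) :
    0 < betaProd β k :=
  prod_pos fun i _ => (betaSeq_mem_Ioo_s8 h0 h1 hirr i).1.1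

lemma betaProd_succ (k : ℕ) : betaProd β (k + 1) = betaProd β k * betaSeq β k :=
  prod_range_succ _ _

lemma ell_succ_of_nDigit_eq {k m : ℕ} (hm : nDigit β k = m + 2) :
    ell β (k + 1) = ((m + 1) * (ell β k).1 + (ell β k).2, m * (ell β k).1 + (ell β k).2) := by
  simp only [ell, hm]
  congr <;> omega

lemma bword_sum_succ_of_nDigit_eq {k m : ℕ} (hm : nDigit β k = m + 2) :
    ((bword β (k + 1)).1.sum, (bword β (k + 1)).2.sum) =
      ((m + 1) * (bword β k).1.sum + (bword β k).2.sum,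
        m * (bword β k).1.sum + (bword β k).2.sum) := by
  have h1 : (↑m + 2 - 1 : ℤ).toNat = m + 1 := by omega
  simp [bword, hm, h1, List.sum_flatten, List.sum_replicate]

lemma betaProd_succ_succ_of_nDigit_eq (h0 : 0 < β) (h1 : β < 1) (hirr : Irrational β) {k m : ℕ}
    (hm : nDigit β k = m + 2) :
    betaProd β (k + 2) = (m + 2) * betaProd β (k + 1) - betaProd β k ∧
      (m + 1) * betaProd β (k + 1) < betaProd β k := by
  obtain ⟨⟨hpos, -⟩, -⟩ := betaSeq_mem_Ioo_s8 h0 h1 hirr k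
  have hceil : (⌈1 / betaSeq β k⌉ : ℝ) = m + 2 := by
    rw [← nDigit, hm]; push_cast; ring
  have hlt : (m + 1) * betaSeq β k < 1 := by
    have := Int.ceil_lt_add_one (1 / betaSeq β k)
    rw [hceil, ← sub_lt_iff_lt_add, lt_div_iff₀ hpos] at this
    linarith
  have hD := betaProd_pos h0 h1 hirr k
  simp only [betaProd_succ, betaSeq, hceil]
  constructor
  · field_simp
  · nlinarith

theorem blockApprox_and_paritySigns (h0 : 0 < β) (h1 : β < 1) (hirr : Irrational β) (k : ℕ) :
    BlockApprox β (betaProd β k) (betaProd β (k + 1)) (ell β k).1 (ell β k).2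
        (bword β k).1.sum (bword β k).2.sum ∧
      ParitySigns (bword β k).1.sum (bword β k).2.sum (signSum β (ell β k).1)
        (signSum β (ell β k).2) := by
  induction k with
  | zero =>
    have hsign : signSum β 1 = 1 := by simp [signSum]
    refine ⟨⟨?_, ?_, ?_, ?_, ?_⟩, Or.inl ⟨rfl, rfl, hsign⟩⟩ <;>
      simp [ell, bword, betaProd, betaSeq, h0.le]
  | succ k ih =>
    obtain ⟨A, P⟩ := ih
    obtain ⟨m, hm⟩ := exists_nDigit_eq h0 h1 hirr k
    obtain ⟨hrec, hlt⟩ := betaProd_succ_succ_of_nDigit_eq h0 h1 hirr hm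
    have hD' := (betaProd_pos h0 h1 hirr (k + 1)).le
    obtain ⟨hp, hs⟩ := Prod.mk.inj (bword_sum_succ_of_nDigit_eq hm)
    rw [ell_succ_of_nDigit_eq hm, hp, hs, hrec]
    exact ⟨A.step hD' m hlt, A.paritySigns_step hD' m hlt P⟩

end Sequence

end MinusCF

theorem parity_position_lemma_general
    (α : ℝ) (h0 : 0 < α) (h1 : α < 1/2) (hirr : Irrational α)
    (k : ℕ) :
    (eps (2*α) k = (0,1) ∨ eps (2*α) k = (1,0) ∨ eps (2*α) k = (1,1)) ∧
    (eps (2*α) k = (0,1) → sPos α (ell (2*α) k).1 = 1) ∧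
    (eps (2*α) k = (1,0) → sPos α (ell (2*α) k).2 = 1) ∧
    (eps (2*α) k = (1,1) → sPos α (ell (2*α) k).1 - sPos α (ell (2*α) k).2 = 1) := by
  have hirr2 : Irrational (2 * α) := by simpa using hirr.natCast_mul (m := 2) two_ne_zero
  have h := (MinusCF.blockApprox_and_paritySigns (by linarith) (by linarith) hirr2 k).2
  simp only [eps, MinusCF.sPos_eq_signSum, Prod.mk.injEq]
  rcases h with ⟨hp, hs, h⟩ | ⟨hp, hs, h⟩ | ⟨hp, hs, h⟩ <;> simp [hp, hs, h]

theorem parity_position_lemma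
    (α : ℝ) (h0 : 0 < α) (h1 : α < 1/2) (hirr : Irrational α)
    (k : ℕ) (hk : 1 ≤ k) :
    (eps (2*α) k = (0,1) ∨ eps (2*α) k = (1,0) ∨ eps (2*α) k = (1,1)) ∧
    (eps (2*α) k = (0,1) → sPos α (ell (2*α) k).1 = 1) ∧
    (eps (2*α) k = (1,0) → sPos α (ell (2*α) k).2 = 1) ∧
    (eps (2*α) k = (1,1) → sPos α (ell (2*α) k).1 - sPos α (ell (2*α) k).2 = 1) :=
  parity_position_lemma_general α h0 h1 hirr k
end

section
/- Let α ∈ (0,1/2) be irrational. Then for every k ≥ 1 the following hold: (1) if (ε_k(0),ε_k(1)) = (1,0) and (ε_{k+1}(0),ε_{k+1}(1)) = (0,1), then s_k(0) − s_{k+1}(1) = 1; (2) if (ε_k(0),ε_k(1)) = (1,0) and (ε_{k+1}(0),ε_{k+1}(1)) = (1,0), then s_k(0) − s_{k+1}(0) = 1; (3) if (ε_k(0),ε_k(1)) = (1,1) and (ε_{k+1}(0),ε_{k+1}(1)) = (1,0), then s_k(0) − s_{k+1}(0) = 1; (4) if (ε_k(0),ε_k(1)) = (1,1) and (ε_{k+1}(0),ε_{k+1}(1))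 = (0,1), then s_k(0) − s_{k+1}(1) = 1; (5) if (ε_k(0),ε_k(1)) = (0,1) and (ε_{k+1}(0),ε_{k+1}(1)) = (1,1), then s_{k+1}(0) − s_k(1) = n_{k+1} − 1. -/
/-!
Put `β = 2α` and let `c_j = ⌊(j+1)β⌋ - ⌊jβ⌋ ∈ {0,1}` be the mechanical word of `β`. Since
`φ({jα}) = (-1)^⌊jβ⌋ = (-1)^(c_0 + ⋯ + c_{j-1})`, `s(ℓ)` is the position after `ℓ` steps of a walk
that starts at `0` heading right and turns around after every letter `1` of `c`.

If `1/β = n - β₁`, the blocks `{j : ⌊jβ⌋ = R}` show that the mechanical word of `β` is the image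
of that of `β₁` under `0 ↦ 0^(n-1) 1`, `1 ↦ 0^(n-2) 1`, which is how `b_{k+1}` arises from `b_k`
of `β₁`. Hence `b_k(0)` is a prefix of `c`, and so is `b_k(1)` up to its last letter, which the
walk does not see: `s_k(i)` is the endpoint of the walk along `b_k(i)`.

Along `u' = u^(n-1) v`, `v' = u^(n-2) v` the endpoints satisfy an invariant governed by the
parities `(ε(u), ε(v))`: the endpoint of `v` is `1` in state `(1,0)`, that of `u` is `1` in state
`(0,1)`, and they differ by `1` in state `(1,1)`. It holds for `([0], [1])` and is preserved by the
recursion, and each of the five increments is one step of that preservation argument.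
-/

open List

def walkPos : List ℕ → ℤ
  | [] => 0
  | a :: w => 1 + (-1) ^ a * walkPos w

theorem walkPos_append (u v : List ℕ) :
    walkPos (u ++ v) = walkPos u + (-1) ^ u.sum * walkPos v := by
  induction u with
  | nil => simp [walkPos]
  | cons a u ih => simp only [cons_append, walkPos, ih, sum_cons, pow_add]; ring

theorem walkPos_concat (w : List ℕ) (a : ℕ) : walkPos (w ++ [a]) = walkPos w + (-1) ^ w.sum := by
  simp [walkPos_append, walkPos]

theorem walkPos_dropLast_concat {w : List ℕ} (hw : w ≠ []) (a : ℕ) :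
    walkPos (w.dropLast ++ [a]) = walkPos w := by
  conv_rhs => rw [← dropLast_append_getLast hw]
  rw [walkPos_concat, walkPos_concat]

theorem sum_flatten_replicate (m : ℕ) (u : List ℕ) : (replicate m u).flatten.sum = m * u.sum := by
  simp only [sum_flatten, map_replicate, sum_replicate, smul_eq_mul]

theorem flatMap_flatten_replicate {α γ : Type*} (f : α → List γ) (m : ℕ) (u : List α) :
    (replicate m u).flatten.flatMap f = (replicate m (u.flatMap f)).flatten := by
  induction m with
  | zero => rfl
  | succ m ih => rw [replicate_succ, flatten_cons, flatMap_append, ih, replicate_succ, flatten_cons]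

theorem walkPos_flatten_replicate_of_even {u : List ℕ} (hu : Even u.sum) (m : ℕ) :
    walkPos (replicate m u).flatten = m * walkPos u := by
  induction m with
  | zero => simp [walkPos]
  | succ m ih =>
    rw [replicate_succ, flatten_cons, walkPos_append, ih, hu.neg_one_pow]
    push_cast; ring

theorem walkPos_flatten_replicate_of_odd {u : List ℕ} (hu : Odd u.sum) (m : ℕ) :
    walkPos (replicate m u).flatten = if Even m then 0 else walkPos u := by
  induction m with
  | zero => simp [walkPos]
  | succ m ih =>
    rw [replicate_succ, flatten_cons, walkPos_append, ih, hu.neg_one_pow]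
    by_cases hm : Even m <;> simp [hm, Nat.even_add_one]

def WalkInvariant (u v : List ℕ) : Prop :=
  (Odd u.sum ∧ Even v.sum ∧ walkPos v = 1) ∨
  (Even u.sum ∧ Odd v.sum ∧ walkPos u = 1) ∨
  (Odd u.sum ∧ Odd v.sum ∧ walkPos u = walkPos v + 1)

namespace WalkInvariant

variable {u v : List ℕ}

theorem walkPos_flatten_replicate_append_of_odd (h : WalkInvariant u v) (hu : Odd u.sum) {m : ℕ}
    (hodd : Odd ((replicate m u).flatten ++ v).sum) :
    walkPos ((replicate m u).flatten ++ v) = walkPos u - 1 := by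
  rw [sum_append, sum_flatten_replicate] at hodd
  rw [walkPos_append, walkPos_flatten_replicate_of_odd hu, sum_flatten_replicate]
  have hpow : ∀ n, (-1 : ℤ) ^ (n * u.sum) = (-1) ^ n := fun n => by
    rw [pow_mul', hu.neg_one_pow]
  rw [hpow]
  rcases h with ⟨-, hv, hT⟩ | ⟨hu', -, -⟩ | ⟨-, hv, hT⟩
  · have hm : Odd m := by
      simpa [Nat.odd_add, Nat.odd_mul, hu, hv] using hodd
    rw [if_neg (Nat.not_even_iff_odd.2 hm), hm.neg_one_pow, hT]; ring
  · exact absurd hu (Nat.not_odd_iff_even.2 hu')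
  · have hm : Even m := by
      simpa [Nat.odd_add, Nat.odd_mul, hu, ← Nat.not_odd_iff_even, hv] using hodd
    rw [if_pos hm, hm.neg_one_pow, hT]; ring

theorem walkPos_flatten_replicate_append_of_even (h : WalkInvariant u v) (hu : Even u.sum) (m : ℕ) :
    walkPos ((replicate m u).flatten ++ v) = m + walkPos v := by
  rcases h with ⟨hu', -, -⟩ | ⟨-, -, hT⟩ | ⟨hu', -, -⟩
  · exact absurd hu' (Nat.not_odd_iff_even.2 hu)
  · rw [walkPos_append, walkPos_flatten_replicate_of_even hu, sum_flatten_replicate,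
      (hu.mul_left m).neg_one_pow, hT]; ring
  · exact absurd hu' (Nat.not_odd_iff_even.2 hu)

theorem flatten_replicate_append (h : WalkInvariant u v) (m : ℕ) :
    WalkInvariant ((replicate (m + 1) u).flatten ++ v) ((replicate m u).flatten ++ v) := by
  set v' := (replicate m u).flatten ++ v
  have hu' : (replicate (m + 1) u).flatten ++ v = u ++ v' := by
    simp [v', replicate_succ]
  rw [hu']
  rcases Nat.even_or_odd u.sum with hu | hu
  · obtain ⟨hv, hTu⟩ : Odd v.sum ∧ walkPos u = 1 := by
      rcases h with ⟨hu', -, -⟩ | ⟨-, hv, hT⟩ | ⟨hu', -, -⟩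
      · exact absurd hu' (Nat.not_odd_iff_even.2 hu)
      · exact ⟨hv, hT⟩
      · exact absurd hu' (Nat.not_odd_iff_even.2 hu)
    have hv' : Odd v'.sum := by
      rw [sum_append, sum_flatten_replicate]; exact (hu.mul_left m).add_odd hv
    refine Or.inr (Or.inr ⟨?_, hv', ?_⟩)
    · rw [sum_append]; exact hu.add_odd hv'
    · rw [walkPos_append, hu.neg_one_pow, hTu]; ring
  · rcases Nat.even_or_odd v'.sum with hv' | hv'
    · have hodd : Odd ((replicate (m + 1) u).flatten ++ v).sum := by
        rw [hu', sum_append]; exact hu.add_even hv'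
      have hTu' := h.walkPos_flatten_replicate_append_of_odd hu hodd
      rw [hu', walkPos_append, hu.neg_one_pow] at hTu'
      refine Or.inl ⟨?_, hv', by linarith⟩
      rw [sum_append]; exact hu.add_even hv'
    · have hTv' := h.walkPos_flatten_replicate_append_of_odd hu hv'
      refine Or.inr (Or.inl ⟨?_, hv', ?_⟩)
      · rw [sum_append]; exact hu.add_odd hv'
      · rw [walkPos_append, hu.neg_one_pow, hTv']; ring

end WalkInvariant

section Words

variable {β : ℝ}

theorem bword_succ_of_two_le_nDigit {k : ℕ} (hn : 2 ≤ nDigit β k) :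
    bword β (k + 1) =
      ((replicate ((nDigit β k - 2).toNat + 1) (bword β k).1).flatten ++ (bword β k).2,
       (replicate (nDigit β k - 2).toNat (bword β k).1).flatten ++ (bword β k).2) := by
  rw [bword, show (nDigit β k - 1).toNat = (nDigit β k - 2).toNat + 1 by omega]

theorem walkInvariant_bword (hn : ∀ k, 2 ≤ nDigit β k) (k : ℕ) :
    WalkInvariant (bword β k).1 (bword β k).2 := by
  induction k with
  | zero => exact Or.inr (Or.inl ⟨Even.zero, odd_one, rfl⟩)
  | succ k ih => rw [bword_succ_of_two_le_nDigit (hn k)]; exact ih.flatten_replicate_append _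

theorem bword_snd_ne_nil (k : ℕ) : (bword β k).2 ≠ [] := by
  induction k with
  | zero => simp [bword]
  | succ k ih => simp [bword, ih]

theorem dropLast_bword_snd_prefix (hn : ∀ k, 2 ≤ nDigit β k) (k : ℕ) :
    (bword β k).2.dropLast <+: (bword β k).1 := by
  induction k with
  | zero => simp [bword]
  | succ k ih =>
    rw [bword_succ_of_two_le_nDigit (hn k), dropLast_append_of_ne_nil (bword_snd_ne_nil k),
      replicate_succ', flatten_append, flatten_singleton, append_assoc, prefix_append_right_inj]
    exact ih.trans (prefix_append _ _)

theorem ell_eq_length (k : ℕ) : ell β k = ((bword β k).1.length, (bword β k).2.length) := by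
  induction k with
  | zero => rfl
  | succ k ih => simp [ell, bword, ih]

end Words

noncomputable def mechanicalWord (β : ℝ) (j : ℕ) : ℕ := ⌊(j + 1) * β⌋₊ - ⌊j * β⌋₊

section Mechanical

variable {β : ℝ}

theorem sum_map_range_mechanicalWord (hβ : 0 ≤ β) (ℓ : ℕ) :
    ((range ℓ).map (mechanicalWord β)).sum = ⌊ℓ * β⌋₊ := by
  induction ℓ with
  | zero => simp
  | succ ℓ ih =>
    have hmono : ⌊ℓ * β⌋₊ ≤ ⌊(ℓ + 1) * β⌋₊ := Nat.floor_mono (by nlinarith)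
    rw [sum_range_succ, ih, mechanicalWord]
    push_cast
    omega

theorem phi_fract_eq_neg_one_pow {y : ℝ} (hy : 0 ≤ y) : phi (Int.fract y) = (-1) ^ ⌊2 * y⌋₊ := by
  have hfract : Int.fract y = y - ⌊y⌋₊ := by
    rw [← Int.self_sub_floor, ← Int.natCast_floor_eq_floor hy, Int.cast_natCast]
  have hle := Nat.floor_le hy
  have hlt := Nat.lt_floor_add_one y
  rw [phi, Int.fract_fract, hfract]
  split_ifs with h
  · have h2 : ⌊2 * y⌋₊ = 2 * ⌊y⌋₊ :=
      (Nat.floor_eq_iff (by positivity)).2 ⟨by push_cast; linarith, by push_cast; linarith⟩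
    rw [h2, pow_mul]
    norm_num
  · have h2 : ⌊2 * y⌋₊ = 2 * ⌊y⌋₊ + 1 :=
      (Nat.floor_eq_iff (by positivity)).2 ⟨by push_cast; linarith, by push_cast; linarith⟩
    rw [h2, pow_succ, pow_mul]
    norm_num

theorem sPos_eq_walkPos {α : ℝ} (hα : 0 ≤ α) (ℓ : ℕ) :
    sPos α ℓ = walkPos ((range ℓ).map (mechanicalWord (2 * α))) := by
  induction ℓ with
  | zero => simp [sPos, walkPos]
  | succ ℓ ih =>
    rw [sPos, Finset.sum_range_succ, ← sPos, ih, range_succ, map_append, map_singleton,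
      walkPos_concat, sum_map_range_mechanicalWord (by positivity),
      phi_fract_eq_neg_one_pow (by positivity), mul_left_comm]

def IsMechanicalPrefix (β : ℝ) (w : List ℕ) : Prop := (range w.length).map (mechanicalWord β) = w

theorem IsMechanicalPrefix.walkPos_of_dropLast_prefix {u v : List ℕ} (hu : IsMechanicalPrefix β u)
    (hvu : v.dropLast <+: u) (hv : v ≠ []) :
    walkPos ((range v.length).map (mechanicalWord β)) = walkPos v := by
  have hlen : v.length - 1 ≤ u.length := by simpa using hvu.length_le
  have hdrop : (range (v.length - 1)).map (mechanicalWord β) = v.dropLast := by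
    rw [prefix_iff_eq_take.1 hvu, ← hu, ← map_take, take_range, length_dropLast,
      min_eq_left hlen]
  rw [← Nat.sub_add_cancel (length_pos_iff.2 hv), range_succ, map_append, hdrop, map_singleton,
    walkPos_dropLast_concat hv]

end Mechanical

section Blocks

variable {β : ℝ}

theorem floor_mul_eq_of_ceil_div_le {j R : ℕ} (hβ : 0 < β) (hlo : ⌈(R : ℝ) / β⌉₊ ≤ j)
    (hhi : j < ⌈((R : ℝ) + 1) / β⌉₊) : ⌊j * β⌋₊ = R := by
  rw [Nat.ceil_le, div_le_iff₀ hβ] at hlo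
  rw [Nat.lt_ceil, lt_div_iff₀ hβ] at hhi
  exact (Nat.floor_eq_iff (by positivity)).2 ⟨hlo, hhi⟩

theorem ceil_div_lt_ceil_div_add_one (hβ : 0 < β) (hβ1 : β ≤ 1) (x : ℝ) (hx : 0 ≤ x) :
    ⌈x / β⌉₊ < ⌈(x + 1) / β⌉₊ := by
  have hstep : x / β + 1 ≤ (x + 1) / β := by
    rw [add_div, add_le_add_iff_left, le_div_iff₀ hβ]; linarith
  calc ⌈x / β⌉₊ < ⌈x / β + 1⌉₊ := by rw [Nat.ceil_add_one (by positivity)]; omega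
    _ ≤ ⌈(x + 1) / β⌉₊ := Nat.ceil_mono hstep

/-- The letters `j` with `⌊j β⌋ = R` form the `R`-th block `0 ⋯ 0 1` of the mechanical word. -/
theorem map_range_mechanicalWord_block (hβ : 0 < β) (hβ1 : β ≤ 1) (R : ℕ) :
    (range (⌈((R : ℝ) + 1) / β⌉₊ - ⌈(R : ℝ) / β⌉₊)).map
        (fun i => mechanicalWord β (⌈(R : ℝ) / β⌉₊ + i)) =
      replicate (⌈((R : ℝ) + 1) / β⌉₊ - ⌈(R : ℝ) / β⌉₊ - 1) 0 ++ [1] := by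
  set a := ⌈(R : ℝ) / β⌉₊
  set b := ⌈((R : ℝ) + 1) / β⌉₊
  have hab : a < b := ceil_div_lt_ceil_div_add_one hβ hβ1 R (Nat.cast_nonneg R)
  have hbc : b < ⌈((R : ℝ) + 1 + 1) / β⌉₊ := ceil_div_lt_ceil_div_add_one hβ hβ1 _ (by positivity)
  have hfloor : ∀ j, a ≤ j → j < b → ⌊(j : ℝ) * β⌋₊ = R := fun j hlo hhi =>
    floor_mul_eq_of_ceil_div_le hβ hlo hhi
  have hlast : ⌊(b : ℝ) * β⌋₊ = R + 1 := by
    refine floor_mul_eq_of_ceil_div_le hβ ?_ ?_ <;> push_cast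
    exacts [le_rfl, hbc]
  rw [← Nat.sub_add_cancel (Nat.sub_pos_of_lt hab), range_succ, map_append, Nat.add_sub_cancel,
    map_singleton]
  congr 1
  · refine eq_replicate_iff.2 ⟨by simp, fun x hx => ?_⟩
    obtain ⟨i, hi, rfl⟩ := mem_map.1 hx
    rw [mem_range] at hi
    rw [mechanicalWord, ← Nat.cast_succ, hfloor (a + i) (by omega) (by omega),
      hfloor (a + i).succ (by omega) (by omega), Nat.sub_self]
  · rw [mechanicalWord, ← Nat.cast_succ, show (a + (b - a - 1)).succ = b by omega, hlast,
      hfloor _ (by omega) (by omega), Nat.add_sub_cancel_left]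

theorem map_range_ceil_div_mechanicalWord (hβ : 0 < β) (hβ1 : β ≤ 1) (R : ℕ) :
    (range ⌈(R : ℝ) / β⌉₊).map (mechanicalWord β) =
      ((range R).map fun r : ℕ =>
        replicate (⌈((r : ℝ) + 1) / β⌉₊ - ⌈(r : ℝ) / β⌉₊ - 1) 0 ++ [1]).flatten := by
  induction R with
  | zero => simp
  | succ R ih =>
    have hab := ceil_div_lt_ceil_div_add_one hβ hβ1 R (Nat.cast_nonneg R)
    rw [Nat.cast_succ, ← Nat.add_sub_cancel' hab.le, range_add, map_append, ih, map_map,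
      range_succ, map_append, flatten_append, map_singleton, flatten_singleton]
    exact congrArg _ (map_range_mechanicalWord_block hβ hβ1 R)

def blockSubst (n a : ℕ) : List ℕ := replicate (n - a - 1) 0 ++ [1]

theorem natCast_ceil_div_eq {β₁ : ℝ} {n : ℕ} (hβ : 0 < β) (hβ₁ : 0 ≤ β₁) (h : 1 / β = n - β₁)
    (r : ℕ) : (⌈(r : ℝ) / β⌉₊ : ℤ) = r * n - ⌊r * β₁⌋₊ := by
  have hr : (r : ℝ) / β = ((r * n : ℤ) : ℝ) + -(r * β₁) := by
    rw [div_eq_mul_one_div, h]; push_cast; ring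
  rw [Int.natCast_ceil_eq_ceil (by positivity), hr, Int.ceil_intCast_add, Int.ceil_neg,
    ← Int.natCast_floor_eq_floor (by positivity)]
  ring

theorem map_range_ceil_div_eq_flatMap {β₁ : ℝ} {n : ℕ} (hβ : 0 < β) (hβ1 : β ≤ 1)
    (hβ₁ : 0 ≤ β₁) (h : 1 / β = n - β₁) (R : ℕ) :
    (range ⌈(R : ℝ) / β⌉₊).map (mechanicalWord β) =
      ((range R).map (mechanicalWord β₁)).flatMap (blockSubst n) := by
  rw [map_range_ceil_div_mechanicalWord hβ hβ1, flatMap_map, flatMap_def]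
  refine congrArg _ (map_congr_left fun r _ => ?_)
  have ha := natCast_ceil_div_eq hβ hβ₁ h r
  have hb := natCast_ceil_div_eq hβ hβ₁ h (r + 1)
  have hab := ceil_div_lt_ceil_div_add_one hβ hβ1 r (Nat.cast_nonneg r)
  have hmono : ⌊r * β₁⌋₊ ≤ ⌊(r + 1 : ℕ) * β₁⌋₊ := Nat.floor_mono (by push_cast; nlinarith)
  push_cast at hb hmono
  rw [add_mul, one_mul] at hb
  rw [blockSubst, mechanicalWord]
  congr 2
  omega

theorem IsMechanicalPrefix.flatMap_blockSubst {β β₁ : ℝ} {n : ℕ} {w : List ℕ} (hβ : 0 < β)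
    (hβ1 : β ≤ 1) (hβ₁ : 0 ≤ β₁) (h : 1 / β = n - β₁) (hw : IsMechanicalPrefix β₁ w) :
    IsMechanicalPrefix β (w.flatMap (blockSubst n)) := by
  have hdecomp := map_range_ceil_div_eq_flatMap hβ hβ1 hβ₁ h w.length
  rw [hw] at hdecomp
  have hlen := congrArg length hdecomp
  rw [length_map, length_range] at hlen
  rw [IsMechanicalPrefix, ← hlen, hdecomp]

end Blocks

theorem betaSeq_succ' (β : ℝ) (k : ℕ) : betaSeq β (k + 1) = betaSeq (betaSeq β 1) k := by
  induction k with
  | zero => rfl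
  | succ k ih => rw [betaSeq, ih]; rfl

theorem nDigit_succ' (β : ℝ) (k : ℕ) : nDigit β (k + 1) = nDigit (betaSeq β 1) k := by
  rw [nDigit, nDigit, betaSeq_succ']

theorem bword_succ_eq_flatMap (β : ℝ) (k : ℕ) :
    bword β (k + 1) = ((bword (betaSeq β 1) k).1.flatMap (blockSubst (nDigit β 0).toNat),
      (bword (betaSeq β 1) k).2.flatMap (blockSubst (nDigit β 0).toNat)) := by
  induction k with
  | zero =>
    simp only [bword, flatten_replicate_singleton, flatMap_singleton, blockSubst]
    congr 3 <;> omega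
  | succ k ih =>
    rw [bword, ih, bword, nDigit_succ']
    simp only [flatMap_append, flatMap_flatten_replicate]

theorem Irrational.ceil_inv_sub_inv {x : ℝ} (hx : Irrational x) :
    Irrational ((⌈1 / x⌉ : ℝ) - 1 / x) :=
  irrational_intCast_sub_iff.2 (by rw [one_div]; exact hx.inv)

theorem Irrational.ceil_inv_sub_inv_mem_Ioo {x : ℝ} (hx : Irrational x) :
    (⌈1 / x⌉ : ℝ) - 1 / x ∈ Set.Ioo 0 1 := by
  have hinv : Irrational (1 / x) := by rw [one_div]; exact hx.inv
  have hlt : 1 / x < ⌈1 / x⌉ := (Int.le_ceil _).lt_of_ne (hinv.ne_int _)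
  have := Int.ceil_lt_add_one (1 / x)
  exact ⟨sub_pos.2 hlt, by linarith⟩

section ContinuedFraction

variable {β : ℝ}

theorem irrational_betaSeq (hβ : Irrational β) (k : ℕ) : Irrational (betaSeq β k) := by
  induction k with
  | zero => exact hβ
  | succ k ih => exact ih.ceil_inv_sub_inv

theorem betaSeq_mem_Ioo (hβ : Irrational β) (h0 : 0 < β) (h1 : β < 1) (k : ℕ) :
    betaSeq β k ∈ Set.Ioo 0 1 := by
  cases k with
  | zero => exact ⟨h0, h1⟩
  | succ k => exact (irrational_betaSeq hβ k).ceil_inv_sub_inv_mem_Ioo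

theorem two_le_nDigit (hβ : Irrational β) (h0 : 0 < β) (h1 : β < 1) (k : ℕ) :
    2 ≤ nDigit β k := by
  obtain ⟨hpos, hlt⟩ := betaSeq_mem_Ioo hβ h0 h1 k
  have : (1 : ℝ) < 1 / betaSeq β k := by rw [lt_div_iff₀ hpos]; linarith
  have : (1 : ℤ) < nDigit β k := Int.lt_ceil.2 (by exact_mod_cast this)
  omega

theorem isMechanicalPrefix_bword_fst (hβ : Irrational β) (h0 : 0 < β) (h1 : β < 1) (k : ℕ) :
    IsMechanicalPrefix β (bword β k).1 := by
  induction k generalizing β with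
  | zero => simp [IsMechanicalPrefix, bword, mechanicalWord, Nat.floor_eq_zero.2 h1]
  | succ k ih =>
    obtain ⟨h₁0, h₁1⟩ := hβ.ceil_inv_sub_inv_mem_Ioo
    rw [bword_succ_eq_flatMap]
    refine (ih hβ.ceil_inv_sub_inv h₁0 h₁1).flatMap_blockSubst h0 h1.le h₁0.le ?_
    have hn : 0 ≤ nDigit β 0 := by have := two_le_nDigit hβ h0 h1 0; omega
    rw [← Int.cast_natCast, Int.toNat_of_nonneg hn]
    change (1 : ℝ) / β = ⌈1 / β⌉ - (⌈1 / β⌉ - 1 / β)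
    ring

end ContinuedFraction

theorem position_increments_general
    (α : ℝ) (h0 : 0 < α) (h1 : α < 1/2) (hirr : Irrational α)
    (k : ℕ) :
    (eps (2*α) k = (1,0) → eps (2*α) (k+1) = (0,1) →
      sPos α (ell (2*α) k).1 - sPos α (ell (2*α) (k+1)).2 = 1) ∧
    (eps (2*α) k = (1,0) → eps (2*α) (k+1) = (1,0) →
      sPos α (ell (2*α) k).1 - sPos α (ell (2*α) (k+1)).1 = 1) ∧
    (eps (2*α) k = (1,1) → eps (2*α) (k+1) = (1,0) →
      sPos α (ell (2*α) k).1 - sPos α (ell (2*α) (k+1)).1 = 1) ∧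
    (eps (2*α) k = (1,1) → eps (2*α) (k+1) = (0,1) →
      sPos α (ell (2*α) k).1 - sPos α (ell (2*α) (k+1)).2 = 1) ∧
    (eps (2*α) k = (0,1) → eps (2*α) (k+1) = (1,1) →
      sPos α (ell (2*α) (k+1)).1 - sPos α (ell (2*α) k).2 = nDigit (2*α) k - 1) := by
  have hβ : Irrational (2 * α) := by simpa using hirr.natCast_mul two_ne_zero
  have hβ0 : 0 < 2 * α := by positivity
  have hβ1 : 2 * α < 1 := by linarith
  have hn := two_le_nDigit hβ hβ0 hβ1
  have hpre := isMechanicalPrefix_bword_fst hβ hβ0 hβ1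
  have hs0 : ∀ m, sPos α (ell (2 * α) m).1 = walkPos (bword (2 * α) m).1 := fun m => by
    rw [ell_eq_length, sPos_eq_walkPos h0.le, hpre m]
  have hs1 : ∀ m, sPos α (ell (2 * α) m).2 = walkPos (bword (2 * α) m).2 := fun m => by
    rw [ell_eq_length, sPos_eq_walkPos h0.le]
    exact (hpre m).walkPos_of_dropLast_prefix (dropLast_bword_snd_prefix hn m) (bword_snd_ne_nil m)
  have hinv := walkInvariant_bword hn k
  simp only [hs0, hs1, eps, Prod.mk.injEq, ← Nat.odd_iff, ← Nat.even_iff]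
  rw [bword_succ_of_two_le_nDigit (hn k)]
  refine ⟨fun ⟨hu, _⟩ ⟨_, hv'⟩ => ?_, fun ⟨hu, _⟩ ⟨hu', _⟩ => ?_, fun ⟨hu, _⟩ ⟨hu', _⟩ => ?_,
    fun ⟨hu, _⟩ ⟨_, hv'⟩ => ?_, fun ⟨hu, _⟩ _ => ?_⟩
  · rw [hinv.walkPos_flatten_replicate_append_of_odd hu hv']; ring
  · rw [hinv.walkPos_flatten_replicate_append_of_odd hu hu']; ring
  · rw [hinv.walkPos_flatten_replicate_append_of_odd hu hu']; ring
  · rw [hinv.walkPos_flatten_replicate_append_of_odd hu hv']; ring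
  · rw [hinv.walkPos_flatten_replicate_append_of_even hu]; have := hn k; push_cast; omega

theorem position_increments
    (α : ℝ) (h0 : 0 < α) (h1 : α < 1/2) (hirr : Irrational α)
    (k : ℕ) (hk : 1 ≤ k) :
    (eps (2*α) k = (1,0) → eps (2*α) (k+1) = (0,1) →
      sPos α (ell (2*α) k).1 - sPos α (ell (2*α) (k+1)).2 = 1) ∧
    (eps (2*α) k = (1,0) → eps (2*α) (k+1) = (1,0) →
      sPos α (ell (2*α) k).1 - sPos α (ell (2*α) (k+1)).1 = 1) ∧
    (eps (2*α) k = (1,1) → eps (2*α) (k+1) = (1,0) →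
      sPos α (ell (2*α) k).1 - sPos α (ell (2*α) (k+1)).1 = 1) ∧
    (eps (2*α) k = (1,1) → eps (2*α) (k+1) = (0,1) →
      sPos α (ell (2*α) k).1 - sPos α (ell (2*α) (k+1)).2 = 1) ∧
    (eps (2*α) k = (0,1) → eps (2*α) (k+1) = (1,1) →
      sPos α (ell (2*α) (k+1)).1 - sPos α (ell (2*α) k).2 = nDigit (2*α) k - 1) :=
  position_increments_general α h0 h1 hirr k
end

section
/- For every Γ > 0 there exists c > 0 such that for every integer n ≥ 1 and every real-valued random variable X with E(X²) ≤ Γ·n, one has (1/(2π))∫_{−π}^{π} |E(e^{iθX})|² dθ ≥ c/√n. -/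
/-!
For `|θ| ≤ M^{-1/2}`, where `M = E(X²)`, the bound `cos y ≥ 1 - y²/2` gives
`Re E(e^{iθX}) = E(cos θX) ≥ 1/2`, hence `|E(e^{iθX})|² ≥ 1/4` on an interval around `0` of
length of order `M^{-1/2} ≳ 1/√n`, which still fits inside `[-π, π]` after shrinking by a
constant depending only on `Γ`.
-/

open MeasureTheory

namespace MeasureTheory

variable {μ : Measure ℝ}

lemma re_charFun [IsFiniteMeasure μ] (t : ℝ) : (charFun μ t).re = ∫ x, Real.cos (t * x) ∂μ := by
  have hint : Integrable (fun x : ℝ => Complex.exp (t * x * Complex.I)) μ :=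
    (integrable_const (1 : ℝ)).mono' (by fun_prop) (.of_forall fun x => by
      rw [← Complex.ofReal_mul, Complex.norm_exp_ofReal_mul_I])
  rw [charFun_apply_real, ← RCLike.re_to_complex, ← integral_re hint]
  simp_rw [← Complex.ofReal_mul, RCLike.re_to_complex, Complex.exp_ofReal_mul_I_re]

variable [IsProbabilityMeasure μ]

lemma one_sub_sq_mul_integral_sq_div_two_le_re_charFun (hμ : Integrable (fun x => x ^ 2) μ)
    (t : ℝ) : 1 - t ^ 2 * (∫ x, x ^ 2 ∂μ) / 2 ≤ (charFun μ t).re := by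
  have hquad : Integrable (fun x => 1 - t ^ 2 / 2 * x ^ 2) μ :=
    (integrable_const 1).sub (hμ.const_mul _)
  have hcos : Integrable (fun x => Real.cos (t * x)) μ :=
    (integrable_const (1 : ℝ)).mono' (by fun_prop)
      (.of_forall fun x => Real.abs_cos_le_one _)
  calc 1 - t ^ 2 * (∫ x, x ^ 2 ∂μ) / 2 = ∫ x, (1 - t ^ 2 / 2 * x ^ 2) ∂μ := by
        rw [integral_sub (integrable_const 1) (hμ.const_mul _), integral_const_mul]
        simp only [integral_const, probReal_univ, smul_eq_mul, mul_one]
        ring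
    _ ≤ ∫ x, Real.cos (t * x) ∂μ := integral_mono hquad hcos fun x => by
        have := Real.one_sub_sq_div_two_le_cos (x := t * x)
        linarith [show (t * x) ^ 2 = t ^ 2 * x ^ 2 by ring]
    _ = (charFun μ t).re := (re_charFun t).symm

lemma one_div_four_le_sq_norm_charFun (hμ : Integrable (fun x => x ^ 2) μ) {t : ℝ}
    (ht : t ^ 2 * ∫ x, x ^ 2 ∂μ ≤ 1) : 1 / 4 ≤ ‖charFun μ t‖ ^ 2 := by
  have hre := one_sub_sq_mul_integral_sq_div_two_le_re_charFun hμ t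
  have hnorm := Complex.re_le_norm (charFun μ t)
  nlinarith

lemma div_two_le_integral_sq_norm_charFun (hμ : Integrable (fun x => x ^ 2) μ) {δ a : ℝ}
    (hδ : 0 ≤ δ) (hδa : δ ≤ a) (hδμ : δ ^ 2 * ∫ x, x ^ 2 ∂μ ≤ 1) :
    δ / 2 ≤ ∫ t in -a..a, ‖charFun μ t‖ ^ 2 := by
  have hcont : Continuous fun t => ‖charFun μ t‖ ^ 2 := by fun_prop
  have hmoment_nonneg : 0 ≤ ∫ x, x ^ 2 ∂μ := integral_nonneg fun x => sq_nonneg x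
  have hquarter : ∀ t ∈ Set.Icc (-δ) δ, 1 / 4 ≤ ‖charFun μ t‖ ^ 2 := fun t ht =>
    one_div_four_le_sq_norm_charFun hμ <|
      (mul_le_mul_of_nonneg_right (sq_le_sq' ht.1 ht.2) hmoment_nonneg).trans hδμ
  calc δ / 2 = ∫ _ in -δ..δ, (1 / 4 : ℝ) := by
        simp only [intervalIntegral.integral_const, sub_neg_eq_add, smul_eq_mul]; ring
    _ ≤ ∫ t in -δ..δ, ‖charFun μ t‖ ^ 2 :=
        intervalIntegral.integral_mono_on (by linarith) intervalIntegrable_const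
          (hcont.intervalIntegrable _ _) hquarter
    _ ≤ ∫ t in -a..a, ‖charFun μ t‖ ^ 2 :=
        intervalIntegral.integral_mono_interval (by linarith) (by linarith) hδa
          (.of_forall fun t => by positivity) (hcont.intervalIntegrable _ _)

lemma charFun_map_eq_integral_exp {Ω : Type*} [MeasurableSpace Ω] {P : Measure Ω}
    {X : Ω → ℝ} (hX : AEMeasurable X P) (t : ℝ) :
    charFun (P.map X) t = ∫ ω, Complex.exp (Complex.I * t * X ω) ∂P := by
  rw [charFun_apply_real, integral_map hX (by fun_prop)]
  simp_rw [mul_comm Complex.I, mul_right_comm _ Complex.I]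

end MeasureTheory

theorem char_fn_L2_lower_bound (Γ : ℝ) (hΓ : 0 < Γ) :
    ∃ c : ℝ, 0 < c ∧
      ∀ (n : ℕ), 1 ≤ n →
      ∀ (Ω : Type) (_ : MeasurableSpace Ω) (P : Measure Ω),
        IsProbabilityMeasure P →
        ∀ (X : Ω → ℝ), Measurable X →
          Integrable (fun ω => (X ω)^2) P →
          (∫ ω, (X ω)^2 ∂P) ≤ Γ * n →
          c / Real.sqrt n ≤
            (1 / (2 * Real.pi)) *
              ∫ θ in (-Real.pi)..Real.pi,
                ‖∫ ω, Complex.exp (Complex.I * (θ : ℂ) * (X ω : ℂ)) ∂P‖^2 := by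
  set c₀ := min Real.pi (1 / Real.sqrt Γ)
  have hc₀ : 0 < c₀ := lt_min Real.pi_pos (by positivity)
  refine ⟨c₀ / (4 * Real.pi), by positivity, ?_⟩
  intro n hn Ω _ P _ X hX hX2 hmoment
  have hsqrt_n : 1 ≤ Real.sqrt n := Real.one_le_sqrt.mpr (by exact_mod_cast hn)
  have hc₀_sq : c₀ ^ 2 * Γ ≤ 1 := calc
    c₀ ^ 2 * Γ ≤ (1 / Real.sqrt Γ) ^ 2 * Γ := by gcongr; exact min_le_right _ _
    _ = 1 := by rw [div_pow, Real.sq_sqrt hΓ.le]; field_simp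
  have hδ_le_pi : c₀ / Real.sqrt n ≤ Real.pi :=
    (div_le_self hc₀.le hsqrt_n).trans (min_le_left _ _)
  have hδ_moment : (c₀ / Real.sqrt n) ^ 2 * ∫ x, x ^ 2 ∂(P.map X) ≤ 1 := by
    rw [integral_map hX.aemeasurable (by fun_prop), div_pow,
      Real.sq_sqrt (Nat.cast_nonneg n)]
    calc c₀ ^ 2 / n * ∫ ω, X ω ^ 2 ∂P ≤ c₀ ^ 2 / n * (Γ * n) := by gcongr
      _ = c₀ ^ 2 * Γ := by field_simp
      _ ≤ 1 := hc₀_sq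
  have : IsProbabilityMeasure (P.map X) := Measure.isProbabilityMeasure_map hX.aemeasurable
  have hintegral := div_two_le_integral_sq_norm_charFun
    ((integrable_map_measure (by fun_prop) hX.aemeasurable).mpr hX2) (by positivity)
    hδ_le_pi hδ_moment
  simp_rw [charFun_map_eq_integral_exp hX.aemeasurable] at hintegral
  calc c₀ / (4 * Real.pi) / Real.sqrt n = 1 / (2 * Real.pi) * (c₀ / Real.sqrt n / 2) := by
        field_simp; ring
    _ ≤ _ := by gcongr
end

section
/- Let Y be a real random variable with E(Y²) < ∞ and let W := Y − Y′, where Y′ is an independent copy of Y. Then for every θ ≠ 0: |E(e^{iθY})|² ≤ 1 − (2θ²/π²)·E(W²·1_{[|W| ≤ π/|θ|]}). -/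
/-!
Independence and equality of laws give `E e^{iθW} = φ(θ) · conj φ(θ) = |φ(θ)|²` for the
characteristic function `φ` of `Y`, hence `|φ(θ)|² = E cos(θW)`. Integrating the
inequality `cos x ≤ 1 - 2x²/π²`, valid for `|x| ≤ π`, over the event `|θW| ≤ π` (and
`cos x ≤ 1` off it) gives the bound.
-/

open MeasureTheory ProbabilityTheory Complex ComplexConjugate
open scoped Real

lemma re_charFun_eq_integral_cos {μ : Measure ℝ} [IsFiniteMeasure μ] (t : ℝ) :
    (charFun μ t).re = ∫ x, Real.cos (t * x) ∂μ := by
  have hint : Integrable (fun x : ℝ => exp (t * x * I)) μ :=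
    .of_bound (by fun_prop) 1 (ae_of_all _ fun x => by
      rw [← ofReal_mul, norm_exp_ofReal_mul_I])
  rw [charFun_apply_real, ← RCLike.re_eq_complex_re, ← integral_re hint]
  simp_rw [RCLike.re_eq_complex_re, ← ofReal_mul, exp_ofReal_mul_I_re]

lemma charFun_map_neg_comp {Ω E : Type*} [MeasurableSpace Ω] {P : Measure Ω}
    [NormedAddCommGroup E] [InnerProductSpace ℝ E] [MeasurableSpace E] [BorelSpace E]
    {X : Ω → E} (hX : AEMeasurable X P) (t : E) :
    charFun (P.map fun ω => -X ω) t = conj (charFun (P.map X) t) := by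
  simpa using charFun_map_smul_comp hX (-1) t

lemma ProbabilityTheory.IndepFun.charFun_map_sub_eq_sq_norm {Ω E : Type*} [MeasurableSpace Ω]
    {P : Measure Ω} [IsFiniteMeasure P] [NormedAddCommGroup E] [InnerProductSpace ℝ E]
    [MeasurableSpace E] [BorelSpace E] [SecondCountableTopology E] {X X' : Ω → E}
    (hindep : IndepFun X X' P) (hid : IdentDistrib X X' P P) (t : E) :
    charFun (P.map fun ω => X ω - X' ω) t = ((‖charFun (P.map X) t‖ ^ 2 : ℝ) : ℂ) := by
  have hX := hid.aemeasurable_fst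
  have hX' := hid.aemeasurable_snd
  calc charFun (P.map fun ω => X ω - X' ω) t
      = charFun (P.map X) t * charFun (P.map fun ω => -X' ω) t := by
        simp_rw [sub_eq_add_neg]
        exact congrFun ((hindep.comp measurable_id measurable_neg).charFun_map_fun_add_eq_mul
          hX hX'.neg) t
    _ = charFun (P.map X) t * conj (charFun (P.map X) t) := by
        rw [charFun_map_neg_comp hX', hid.map_eq]
    _ = ((‖charFun (P.map X) t‖ ^ 2 : ℝ) : ℂ) := by
        rw [mul_conj']; push_cast; rfl

lemma mul_ite_sq_le_one_sub_cos (θ x : ℝ) :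
    2 * θ ^ 2 / π ^ 2 * (if |x| ≤ π / |θ| then x ^ 2 else 0) ≤ 1 - Real.cos (θ * x) := by
  split_ifs with hx
  · have hθx : |θ * x| ≤ π := by
      rw [abs_mul]
      calc |θ| * |x| ≤ |θ| * (π / |θ|) := by gcongr
        _ ≤ π := by
          rcases eq_or_ne θ 0 with rfl | hθ
          · simp [Real.pi_pos.le]
          · rw [mul_div_cancel₀ _ (abs_ne_zero.mpr hθ)]
    have := Real.cos_le_one_sub_mul_cos_sq hθx
    linarith [show 2 / π ^ 2 * (θ * x) ^ 2 = 2 * θ ^ 2 / π ^ 2 * x ^ 2 by ring]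
  · simpa using Real.cos_le_one (θ * x)

lemma re_charFun_le_one_sub_mul_integral_ite_sq (μ : Measure ℝ) [IsProbabilityMeasure μ]
    (θ : ℝ) :
    (charFun μ θ).re ≤
      1 - 2 * θ ^ 2 / π ^ 2 * ∫ x, (if |x| ≤ π / |θ| then x ^ 2 else 0) ∂μ := by
  have hcos : Integrable (fun x => Real.cos (θ * x)) μ :=
    .of_bound (by fun_prop) 1 (ae_of_all _ fun x => by simpa using Real.abs_cos_le_one (θ * x))
  rw [re_charFun_eq_integral_cos, le_sub_comm, ← integral_const_mul]
  calc ∫ x, 2 * θ ^ 2 / π ^ 2 * (if |x| ≤ π / |θ| then x ^ 2 else 0) ∂μ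
      ≤ ∫ x, (1 - Real.cos (θ * x)) ∂μ :=
        integral_mono_of_nonneg (ae_of_all _ fun x => by positivity)
          ((integrable_const 1).sub hcos)
          (ae_of_all _ fun x => mul_ite_sq_le_one_sub_cos θ x)
    _ = 1 - ∫ x, Real.cos (θ * x) ∂μ := by
        rw [integral_sub (integrable_const 1) hcos]
        simp

theorem symmetrization_char_fn_bound_general
    {Ω : Type*} [MeasurableSpace Ω] (P : Measure Ω) [IsProbabilityMeasure P]
    (Y Y' : Ω → ℝ)
    (hindep : IndepFun Y Y' P)
    (hid : IdentDistrib Y Y' P P)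
    (θ : ℝ) :
    ‖∫ ω, Complex.exp (Complex.I * (θ : ℂ) * (Y ω : ℂ)) ∂P‖^2 ≤
      1 - (2 * θ^2 / Real.pi^2) *
        ∫ ω, (if |Y ω - Y' ω| ≤ Real.pi / |θ| then (Y ω - Y' ω)^2 else 0) ∂P := by
  have hW : AEMeasurable (fun ω => Y ω - Y' ω) P := hid.aemeasurable_fst.sub hid.aemeasurable_snd
  have := Measure.isProbabilityMeasure_map hW
  have hφ : ∫ ω, exp (I * θ * Y ω) ∂P = charFun (P.map Y) θ := by
    rw [charFun_apply_real, integral_map hid.aemeasurable_fst (by fun_prop)]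
    ring_nf
  have hg : ∫ ω, (if |Y ω - Y' ω| ≤ π / |θ| then (Y ω - Y' ω) ^ 2 else 0) ∂P =
      ∫ x, (if |x| ≤ π / |θ| then x ^ 2 else 0) ∂(P.map fun ω => Y ω - Y' ω) := by
    rw [integral_map hW]
    exact (Measurable.ite (measurableSet_le measurable_id.abs measurable_const) (by fun_prop)
      measurable_const).aestronglyMeasurable
  rw [hφ, hg, ← ofReal_re (‖_‖ ^ 2), ← hindep.charFun_map_sub_eq_sq_norm hid]
  exact re_charFun_le_one_sub_mul_integral_ite_sq (P.map fun ω => Y ω - Y' ω) θ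

theorem symmetrization_char_fn_bound
    {Ω : Type*} [MeasurableSpace Ω] (P : Measure Ω) [IsProbabilityMeasure P]
    (Y Y' : Ω → ℝ) (hY : Measurable Y) (hY' : Measurable Y')
    (hsq : Integrable (fun ω => (Y ω)^2) P)
    (hindep : IndepFun Y Y' P)
    (hid : IdentDistrib Y Y' P P)
    (θ : ℝ) (hθ : θ ≠ 0) :
    ‖∫ ω, Complex.exp (Complex.I * (θ : ℂ) * (Y ω : ℂ)) ∂P‖^2 ≤
      1 - (2 * θ^2 / Real.pi^2) *
        ∫ ω, (if |Y ω - Y' ω| ≤ Real.pi / |θ| then (Y ω - Y' ω)^2 else 0) ∂P :=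
  symmetrization_char_fn_bound_general P Y Y' hindep hid θ
end
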